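/- arXiv:1308.6594 — 9 statements merged into one kernel-verified Lean document; each statement's English description precedes it below -/
import Mathlib

section
/- Let x ∈ X, g ∈ E and γ > 0, and let x⁺ and P_X(x, g, γ) = (x − x⁺)/γ be as in the definition of the generalized projection. Assume the first-order optimality condition holds at x⁺: there exists p ∈ ∂h(x⁺) such that ⟨g + (1/γ)(∇ω(x⁺) − ∇ω(x)) + p, u − x⁺⟩ ≥ 0 for all u ∈ X. Then ⟨g, P_X(x, g, γ)⟩ ≥ α‖P_X(x, g, γ)‖² + (1/γ)(h(x⁺) − h(x)). -/
open RealInnerProductSpace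

/-- Lemma 2.1 (size of the generalized projected gradient):
`⟨g, P_X(x,g,γ)⟩ ≥ α ‖P_X(x,g,γ)‖² + (1/γ)(h(x⁺) - h(x))`. -/
theorem generalized_projection_gradient_lower_bound
    {E : Type*} [NormedAddCommGroup E] [InnerProductSpace ℝ E] [FiniteDimensional ℝ E]
    (X : Set E) (hXne : X.Nonempty) (hXcl : IsClosed X) (hXcv : Convex ℝ X)
    (h : E → ℝ) (hh : ConvexOn ℝ X h)
    (w : E → ℝ) (gw : E → E) (hgw : ∀ x ∈ X, HasGradientAt w (gw x) x)
    (α : ℝ) (hα : 0 < α)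
    (hsc : ∀ x ∈ X, ∀ z ∈ X, α * ‖x - z‖ ^ 2 ≤ ⟪x - z, gw x - gw z⟫)
    (x : E) (hx : x ∈ X) (g : E) (γ : ℝ) (hγ : 0 < γ)
    (xp : E) (hxp : xp ∈ X)
    -- x⁺ is a minimizer over u ∈ X of ⟨g, u⟩ + (1/γ) V(u, x) + h(u),
    -- where V(u, z) = ω(u) - ω(z) - ⟨∇ω(z), u - z⟩
    (hmin : ∀ u ∈ X,
      ⟪g, xp⟫ + (1 / γ) * (w xp - w x - ⟪gw x, xp - x⟫) + h xp ≤
        ⟪g, u⟫ + (1 / γ) * (w u - w x - ⟪gw x, u - x⟫) + h u)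
    -- the first-order optimality condition at x⁺ with some p ∈ ∂h(x⁺)
    (p : E) (hp : ∀ u ∈ X, h xp + ⟪p, u - xp⟫ ≤ h u)
    (hopt : ∀ u ∈ X, 0 ≤ ⟪g + (1 / γ) • (gw xp - gw x) + p, u - xp⟫) :
    α * ‖(1 / γ) • (x - xp)‖ ^ 2 + (1 / γ) * (h xp - h x) ≤ ⟪g, (1 / γ) • (x - xp)⟫ := by
  have h1 := hopt x hx
  have h2 := hp x hx
  have h3 := hsc x hx xp hxp
  rw [inner_add_left, inner_add_left, inner_smul_left] at h1
  have hinner : ⟪gw xp - gw x, x - xp⟫ = -⟪x - xp, gw x - gw xp⟫ := by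
    rw [real_inner_comm, ← inner_neg_right, neg_sub]
  rw [hinner] at h1
  simp only [starRingEnd_apply, star_trivial] at h1
  have key : (1 / γ) * ⟪x - xp, gw x - gw xp⟫ + (h xp - h x) ≤ ⟪g, x - xp⟫ := by
    nlinarith [h1, h2]
  rw [real_inner_smul_right, norm_smul]
  have hγ' : (0:ℝ) < 1 / γ := by positivity
  have hns : ‖(1/γ : ℝ)‖ = 1/γ := by rw [Real.norm_eq_abs, abs_of_pos hγ']
  rw [hns]
  nlinarith [h3, key, sq_nonneg ‖x - xp‖, mul_pos hγ' hγ']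
end

section
/- Fix x ∈ X and γ > 0, and let g₁, g₂ ∈ E. Let x₁⁺ and x₂⁺ be generalized projections computed with g replaced by g₁ and g₂ respectively, each satisfying its first-order optimality condition (there exist p_i ∈ ∂h(x_i⁺) with ⟨g_i + (1/γ)(∇ω(x_i⁺) − ∇ω(x)) + p_i, u − x_i⁺⟩ ≥ 0 for all u ∈ X, i = 1, 2), and set P_X(x, g_i, γ) = (x − x_i⁺)/γ. Then ‖P_X(x, g₁, γ) − P_X(x, g₂, γ)‖ ≤ (1/α)‖g₁ − g₂‖. -/
open RealInnerProductSpace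

/-- Proposition 2.1: `P_X(x, ·, γ)` is Lipschitz:
`‖P_X(x,g₁,γ) - P_X(x,g₂,γ)‖ ≤ (1/α) ‖g₁ - g₂‖`. -/
theorem generalized_projected_gradient_lipschitz
    {E : Type*} [NormedAddCommGroup E] [InnerProductSpace ℝ E] [FiniteDimensional ℝ E]
    (X : Set E) (hXne : X.Nonempty) (hXcl : IsClosed X) (hXcv : Convex ℝ X)
    (h : E → ℝ) (hh : ConvexOn ℝ X h)
    (w : E → ℝ) (gw : E → E) (hgw : ∀ x ∈ X, HasGradientAt w (gw x) x)
    (α : ℝ) (hα : 0 < α)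
    (hsc : ∀ x ∈ X, ∀ z ∈ X, α * ‖x - z‖ ^ 2 ≤ ⟪x - z, gw x - gw z⟫)
    (x : E) (hx : x ∈ X) (γ : ℝ) (hγ : 0 < γ)
    (g₁ g₂ : E) (xp₁ xp₂ : E) (hxp₁ : xp₁ ∈ X) (hxp₂ : xp₂ ∈ X)
    -- xᵢ⁺ is a minimizer over u ∈ X of ⟨gᵢ, u⟩ + (1/γ) V(u, x) + h(u)
    (hmin₁ : ∀ u ∈ X,
      ⟪g₁, xp₁⟫ + (1 / γ) * (w xp₁ - w x - ⟪gw x, xp₁ - x⟫) + h xp₁ ≤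
        ⟪g₁, u⟫ + (1 / γ) * (w u - w x - ⟪gw x, u - x⟫) + h u)
    (hmin₂ : ∀ u ∈ X,
      ⟪g₂, xp₂⟫ + (1 / γ) * (w xp₂ - w x - ⟪gw x, xp₂ - x⟫) + h xp₂ ≤
        ⟪g₂, u⟫ + (1 / γ) * (w u - w x - ⟪gw x, u - x⟫) + h u)
    -- the first-order optimality conditions with p₁ ∈ ∂h(x₁⁺), p₂ ∈ ∂h(x₂⁺)
    (p₁ : E) (hp₁ : ∀ u ∈ X, h xp₁ + ⟪p₁, u - xp₁⟫ ≤ h u)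
    (hopt₁ : ∀ u ∈ X, 0 ≤ ⟪g₁ + (1 / γ) • (gw xp₁ - gw x) + p₁, u - xp₁⟫)
    (p₂ : E) (hp₂ : ∀ u ∈ X, h xp₂ + ⟪p₂, u - xp₂⟫ ≤ h u)
    (hopt₂ : ∀ u ∈ X, 0 ≤ ⟪g₂ + (1 / γ) • (gw xp₂ - gw x) + p₂, u - xp₂⟫) :
    ‖(1 / γ) • (x - xp₁) - (1 / γ) • (x - xp₂)‖ ≤ (1 / α) * ‖g₁ - g₂‖ := by

  have hA := hopt₁ xp₂ hxp₂
  have hB := hopt₂ xp₁ hxp₁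
  have hC1 := hp₁ xp₂ hxp₂
  have hC2 := hp₂ xp₁ hxp₁
  have hsc' := hsc xp₁ hxp₁ xp₂ hxp₂
  have hγ' : (0:ℝ) < 1/γ := by positivity
  have key : (1/γ) * (α * ‖xp₁ - xp₂‖^2) ≤ ⟪g₁ - g₂, xp₂ - xp₁⟫ := by
    simp only [inner_add_left, inner_sub_left, inner_sub_right, real_inner_smul_left] at hA hB hC1 hC2 hsc' ⊢
    have c1 : ⟪xp₁, gw xp₁⟫ = ⟪gw xp₁, xp₁⟫ := real_inner_comm _ _
    have c2 : ⟪xp₁, gw xp₂⟫ = ⟪gw xp₂, xp₁⟫ := real_inner_comm _ _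
    have c3 : ⟪xp₂, gw xp₁⟫ = ⟪gw xp₁, xp₂⟫ := real_inner_comm _ _
    have c4 : ⟪xp₂, gw xp₂⟫ = ⟪gw xp₂, xp₂⟫ := real_inner_comm _ _
    nlinarith [mul_le_mul_of_nonneg_left hsc' (le_of_lt hγ')]
  have hcs : ⟪g₁ - g₂, xp₂ - xp₁⟫ ≤ ‖g₁ - g₂‖ * ‖xp₁ - xp₂‖ := by
    have := real_inner_le_norm (g₁ - g₂) (xp₂ - xp₁)
    rwa [norm_sub_rev xp₂ xp₁] at this
  have hgoal : (1 / γ) • (x - xp₁) - (1 / γ) • (x - xp₂) = (1/γ) • (xp₂ - xp₁) := by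
    rw [← smul_sub]; ring_nf; module
  rw [hgoal, norm_smul]
  simp only [Real.norm_eq_abs, abs_of_pos hγ']
  rw [norm_sub_rev xp₂ xp₁]
  rcases eq_or_ne xp₁ xp₂ with he | hne
  · simp [he]; positivity
  · have hd : 0 < ‖xp₁ - xp₂‖ := by simpa [sub_eq_zero] using hne
    have h2 : (1/γ) * (α * ‖xp₁ - xp₂‖^2) ≤ ‖g₁ - g₂‖ * ‖xp₁ - xp₂‖ := le_trans key hcs
    rw [one_div] at h2
    have h3 : α * ‖xp₁ - xp₂‖ ^ 2 ≤ γ * (‖g₁ - g₂‖ * ‖xp₁ - xp₂‖) :=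
      (inv_mul_le_iff₀ hγ).mp h2
    have goal2 : α * ‖xp₁ - xp₂‖ ≤ γ * ‖g₁ - g₂‖ := by nlinarith
    rw [div_mul_eq_mul_div, div_mul_eq_mul_div, div_le_div_iff₀ hγ hα]
    linarith
end

section
/- Let x ∈ X and γ > 0, let x⁺ be the generalized projection of x with g = ∇f(x), satisfying its first-order optimality condition (there exists p ∈ ∂h(x⁺) with ⟨∇f(x) + (1/γ)(∇ω(x⁺) − ∇ω(x)) + p, u − x⁺⟩ ≥ 0 for all u ∈ X), and set g_X = P_X(x, ∇f(x), γ) = (x − x⁺)/γ. Then Ψ(x⁺) ≤ Ψ(x) − (αγ − (L/2)γ²)‖g_X‖². -/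
/-!
The descent lemma bounds `f x⁺` by `f x + ⟪∇f x, x⁺ - x⟫ + (L/2)‖x⁺ - x‖²`, and the subgradient
inequality at `x` bounds `h x⁺` by `h x - ⟪p, x - x⁺⟫`. Testing the optimality condition at `u = x`
and using strong monotonicity of `∇ω` gives `⟪∇f x + p, x - x⁺⟫ ≥ (α/γ)‖x - x⁺‖²`; adding the three
inequalities yields the claim, since `(αγ - (L/2)γ²)‖(x - x⁺)/γ‖² = (α/γ - L/2)‖x - x⁺‖²`.
-/

open RealInnerProductSpace Set

theorem le_add_deriv_add_half_of_deriv_sub_le {φ φ' : ℝ → ℝ} {C : ℝ}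
    (hφ : ∀ t ∈ Icc (0 : ℝ) 1, HasDerivAt φ (φ' t) t)
    (hφ' : ∀ t ∈ Ioo (0 : ℝ) 1, φ' t - φ' 0 ≤ C * t) :
    φ 1 ≤ φ 0 + φ' 0 + C / 2 := by
  set g : ℝ → ℝ := fun t => φ t - t * φ' 0 - C / 2 * t ^ 2
  have hg : ∀ t ∈ Icc (0 : ℝ) 1, HasDerivAt g (φ' t - φ' 0 - C * t) t := by
    intro t ht
    have := ((hφ t ht).sub ((hasDerivAt_id t).mul_const (φ' 0))).sub
      ((hasDerivAt_pow 2 t).const_mul (C / 2))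
    exact this.congr_deriv (by simp; ring)
  have hanti : AntitoneOn g (Icc 0 1) := by
    refine antitoneOn_of_hasDerivWithinAt_nonpos (convex_Icc 0 1)
      (fun t ht => (hg t ht).continuousAt.continuousWithinAt)
      (fun t ht => (hg t (Ioo_subset_Icc_self (by simpa using ht))).hasDerivWithinAt) ?_
    intro t ht
    have := hφ' t (by simpa using ht)
    linarith
  have := hanti (left_mem_Icc.2 zero_le_one) (right_mem_Icc.2 zero_le_one) zero_le_one
  simp only [g] at this
  linarith

theorem HasGradientAt.hasDerivAt_comp_add_smul
    {E : Type*} [NormedAddCommGroup E] [InnerProductSpace ℝ E] [CompleteSpace E]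
    {f : E → ℝ} {g x d : E} {t : ℝ} (hf : HasGradientAt f g (x + t • d)) :
    HasDerivAt (fun s : ℝ => f (x + s • d)) ⟪g, d⟫ t := by
  have hline : HasDerivAt (fun s : ℝ => x + s • d) d t := by
    simpa using ((hasDerivAt_id t).smul_const d).const_add x
  have hcomp := hf.hasFDerivAt.comp_hasDerivAt t hline
  simp only [InnerProductSpace.toDual_apply_apply] at hcomp
  exact hcomp

theorem Convex.le_add_inner_add_half_sq_of_lipschitz_gradient
    {E : Type*} [NormedAddCommGroup E] [InnerProductSpace ℝ E] [CompleteSpace E]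
    {X : Set E} (hX : Convex ℝ X) {f : E → ℝ} {f' : E → E}
    (hf : ∀ x ∈ X, HasGradientAt f (f' x) x) {L : ℝ}
    (hLip : ∀ x ∈ X, ∀ y ∈ X, ‖f' y - f' x‖ ≤ L * ‖y - x‖)
    {x y : E} (hx : x ∈ X) (hy : y ∈ X) :
    f y ≤ f x + ⟪f' x, y - x⟫ + L / 2 * ‖y - x‖ ^ 2 := by
  set d := y - x
  have hseg : ∀ t ∈ Icc (0 : ℝ) 1, x + t • d ∈ X := fun t ht => hX.add_smul_sub_mem hx hy ht
  have key := le_add_deriv_add_half_of_deriv_sub_le (φ := fun t => f (x + t • d))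
    (φ' := fun t => ⟪f' (x + t • d), d⟫) (C := L * ‖d‖ ^ 2)
    (fun t ht => (hf _ (hseg t ht)).hasDerivAt_comp_add_smul) fun t ht => by
      have hLt := hLip x hx _ (hseg t (Ioo_subset_Icc_self ht))
      rw [add_sub_cancel_left, norm_smul, Real.norm_of_nonneg ht.1.le] at hLt
      calc ⟪f' (x + t • d), d⟫ - ⟪f' (x + (0 : ℝ) • d), d⟫
          = ⟪f' (x + t • d) - f' x, d⟫ := by rw [zero_smul, add_zero, inner_sub_left]
        _ ≤ ‖f' (x + t • d) - f' x‖ * ‖d‖ := real_inner_le_norm _ _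
        _ ≤ L * (t * ‖d‖) * ‖d‖ := by gcongr
        _ = L * ‖d‖ ^ 2 * t := by ring
  simpa [d, mul_div_right_comm] using key

theorem projected_gradient_step_descent_general
    {E : Type*} [NormedAddCommGroup E] [InnerProductSpace ℝ E] [FiniteDimensional ℝ E]
    (X : Set E) (hXcv : Convex ℝ X)
    (h : E → ℝ)
    (gw : E → E)
    (α : ℝ)
    (hsc : ∀ x ∈ X, ∀ z ∈ X, α * ‖x - z‖ ^ 2 ≤ ⟪x - z, gw x - gw z⟫)
    (f : E → ℝ) (f' : E → E) (hf' : ∀ x ∈ X, HasGradientAt f (f' x) x)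
    (L : ℝ)
    (hLip : ∀ x ∈ X, ∀ y ∈ X, ‖f' y - f' x‖ ≤ L * ‖y - x‖)
    (x : E) (hx : x ∈ X) (γ : ℝ) (hγ : 0 < γ)
    (xp : E) (hxp : xp ∈ X)
    -- the first-order optimality condition at x⁺ with some p ∈ ∂h(x⁺)
    (p : E) (hp : ∀ u ∈ X, h xp + ⟪p, u - xp⟫ ≤ h u)
    (hopt : ∀ u ∈ X, 0 ≤ ⟪f' x + (1 / γ) • (gw xp - gw x) + p, u - xp⟫) :
    f xp + h xp ≤ (f x + h x) - (α * γ - (L / 2) * γ ^ 2) * ‖(1 / γ) • (x - xp)‖ ^ 2 := by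
  have hdescent := hXcv.le_add_inner_add_half_sq_of_lipschitz_gradient hf' hLip hx hxp
  have hsubgrad := hp x hx
  have hvar := hopt x hx
  rw [inner_add_left, inner_add_left, real_inner_smul_left, ← neg_sub (gw x), inner_neg_left,
    real_inner_comm (x - xp) (gw x - gw xp), mul_neg] at hvar
  have hmono : 1 / γ * (α * ‖x - xp‖ ^ 2) ≤ 1 / γ * ⟪x - xp, gw x - gw xp⟫ :=
    mul_le_mul_of_nonneg_left (hsc x hx xp hxp) (by positivity)
  rw [← neg_sub x xp, inner_neg_right, norm_neg] at hdescent
  have hscale : (α * γ - L / 2 * γ ^ 2) * ‖(1 / γ) • (x - xp)‖ ^ 2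
      = 1 / γ * (α * ‖x - xp‖ ^ 2) - L / 2 * ‖x - xp‖ ^ 2 := by
    rw [norm_smul, mul_pow, Real.norm_of_nonneg (by positivity)]
    field_simp
  linarith

/-- One step of the projected gradient method decreases `Ψ = f + h`:
`Ψ(x⁺) ≤ Ψ(x) - (αγ - (L/2)γ²) ‖g_X‖²` where `g_X = P_X(x, ∇f(x), γ) = (x - x⁺)/γ`. -/
theorem projected_gradient_step_descent
    {E : Type*} [NormedAddCommGroup E] [InnerProductSpace ℝ E] [FiniteDimensional ℝ E]
    (X : Set E) (hXne : X.Nonempty) (hXcl : IsClosed X) (hXcv : Convex ℝ X)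
    (h : E → ℝ) (hh : ConvexOn ℝ X h)
    (w : E → ℝ) (gw : E → E) (hgw : ∀ x ∈ X, HasGradientAt w (gw x) x)
    (α : ℝ) (hα : 0 < α)
    (hsc : ∀ x ∈ X, ∀ z ∈ X, α * ‖x - z‖ ^ 2 ≤ ⟪x - z, gw x - gw z⟫)
    (f : E → ℝ) (f' : E → E) (hf' : ∀ x ∈ X, HasGradientAt f (f' x) x)
    (L : ℝ) (hL : 0 < L)
    (hLip : ∀ x ∈ X, ∀ y ∈ X, ‖f' y - f' x‖ ≤ L * ‖y - x‖)
    (x : E) (hx : x ∈ X) (γ : ℝ) (hγ : 0 < γ)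
    (xp : E) (hxp : xp ∈ X)
    -- x⁺ is a minimizer over u ∈ X of ⟨∇f(x), u⟩ + (1/γ) V(u, x) + h(u)
    (hmin : ∀ u ∈ X,
      ⟪f' x, xp⟫ + (1 / γ) * (w xp - w x - ⟪gw x, xp - x⟫) + h xp ≤
        ⟪f' x, u⟫ + (1 / γ) * (w u - w x - ⟪gw x, u - x⟫) + h u)
    -- the first-order optimality condition at x⁺ with some p ∈ ∂h(x⁺)
    (p : E) (hp : ∀ u ∈ X, h xp + ⟪p, u - xp⟫ ≤ h u)
    (hopt : ∀ u ∈ X, 0 ≤ ⟪f' x + (1 / γ) • (gw xp - gw x) + p, u - xp⟫) :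
    f xp + h xp ≤ (f x + h x) - (α * γ - (L / 2) * γ ^ 2) * ‖(1 / γ) • (x - xp)‖ ^ 2 :=
  projected_gradient_step_descent_general X hXcv h gw α hsc f f' hf' L hLip x hx γ hγ xp hxp p hp
    hopt
end

section
/- Consider the projected gradient (PG) algorithm: given x₁ ∈ X and stepsizes γ₁, …, γ_N with 0 < γ_k ≤ 2α/L for all k and γ_k < 2α/L for at least one k, iteratively define x_{k+1} as a minimizer over u ∈ X of ⟨∇f(x_k), u⟩ + (1/γ_k)V(u, x_k) + h(u) (each step satisfying its first-order optimality condition with some p_k ∈ ∂h(x_{k+1})), and set g_{X,k} = (x_k − x_{k+1})/γ_k. Let R ∈ {1, …, N} attain the minimum of ‖g_{X,k}‖ over k = 1, …, N. Then ‖g_{X,R}‖² ≤ L·D_Ψ² / Σ_{k=1}^N (αγ_k − Lγ_k²/2), where D_Ψ = ((Ψ(x₁) − Ψ*)/L)^{1/2}. -/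
/-!
Testing the optimality condition of step `k` at `u = x_k` and bounding the three resulting
terms by strong convexity of `ω`, the subgradient inequality for `h` and the descent lemma for
`f` shows that each step decreases `Ψ` by at least `(αγ_k - Lγ_k²/2)‖g_{X,k}‖²`. Summing, the
decrease telescopes to at most `Ψ(x₁) - Ψ*`, while the weighted sum of the `‖g_{X,k}‖²` is at
least `‖g_{X,R}‖²` times the (positive) sum of the weights.
-/

open RealInnerProductSpace

theorem le_add_deriv_zero_add_of_deriv_le {φ φ' : ℝ → ℝ} {M : ℝ}
    (hφ : ∀ t ∈ Set.Icc (0 : ℝ) 1, HasDerivAt φ (φ' t) t)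
    (hφ' : ∀ t ∈ Set.Ico (0 : ℝ) 1, φ' t ≤ φ' 0 + M * t) :
    φ 1 ≤ φ 0 + φ' 0 + M / 2 := by
  have hB (t : ℝ) : HasDerivAt (fun s => φ 0 + φ' 0 * s + M / 2 * s ^ 2) (φ' 0 + M * t) t :=
    ((((hasDerivAt_id' t).const_mul (φ' 0)).const_add (φ 0)).add
      ((hasDerivAt_pow 2 t).const_mul (M / 2))).congr_deriv (by norm_num; ring)
  have hparabola := image_le_of_deriv_right_le_deriv_boundary (a := 0) (b := 1)
    (fun t ht => (hφ t ht).continuousAt.continuousWithinAt)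
    (fun t ht => (hφ t (Set.Ico_subset_Icc_self ht)).hasDerivWithinAt)
    (B := fun s => φ 0 + φ' 0 * s + M / 2 * s ^ 2) (by simp)
    (fun t _ => (hB t).continuousAt.continuousWithinAt) (fun t _ => (hB t).hasDerivWithinAt)
    hφ' (Set.right_mem_Icc.2 zero_le_one)
  simpa using hparabola

theorem Convex.le_add_inner_add_sq_of_gradient_lipschitz {E : Type*} [NormedAddCommGroup E]
    [InnerProductSpace ℝ E] [CompleteSpace E] {X : Set E} (hXcv : Convex ℝ X) {f : E → ℝ}
    {f' : E → E} (hf' : ∀ x ∈ X, HasGradientAt f (f' x) x)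
    {L : ℝ} (hLip : ∀ x ∈ X, ∀ y ∈ X, ‖f' y - f' x‖ ≤ L * ‖y - x‖)
    {x y : E} (hx : x ∈ X) (hy : y ∈ X) :
    f y ≤ f x + ⟪f' x, y - x⟫ + L / 2 * ‖y - x‖ ^ 2 := by
  set c : ℝ → E := fun t => x + t • (y - x)
  have hcX (t : ℝ) (ht : t ∈ Set.Icc (0 : ℝ) 1) : c t ∈ X := hXcv.add_smul_sub_mem hx hy ht
  have hderiv (t : ℝ) (ht : t ∈ Set.Icc (0 : ℝ) 1) :
      HasDerivAt (f ∘ c) ⟪f' (c t), y - x⟫ t :=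
    (hf' _ (hcX t ht)).hasFDerivAt.comp_hasDerivAt t
      (((hasDerivAt_id t).smul_const (y - x)).const_add x |>.congr_deriv (one_smul _ _))
  have hbound (t : ℝ) (ht : t ∈ Set.Ico (0 : ℝ) 1) :
      ⟪f' (c t), y - x⟫ ≤ ⟪f' (c 0), y - x⟫ + L * ‖y - x‖ ^ 2 * t := by
    have hct : ‖c t - x‖ = t * ‖y - x‖ := by simp [c, norm_smul, abs_of_nonneg ht.1]
    have hlip := hLip x hx (c t) (hcX t (Set.Ico_subset_Icc_self ht))
    rw [hct] at hlip
    calc ⟪f' (c t), y - x⟫ = ⟪f' x, y - x⟫ + ⟪f' (c t) - f' x, y - x⟫ := by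
          rw [inner_sub_left]; ring
      _ ≤ ⟪f' x, y - x⟫ + ‖f' (c t) - f' x‖ * ‖y - x‖ := by
          gcongr; exact real_inner_le_norm _ _
      _ ≤ ⟪f' x, y - x⟫ + L * (t * ‖y - x‖) * ‖y - x‖ := by gcongr
      _ = ⟪f' (c 0), y - x⟫ + L * ‖y - x‖ ^ 2 * t := by simp only [c, zero_smul, add_zero]; ring
  have hsegment := le_add_deriv_zero_add_of_deriv_le hderiv hbound
  simp only [Function.comp, c, zero_smul, one_smul, add_zero, add_sub_cancel] at hsegment
  linarith

theorem sufficient_decrease_of_prox_step {E : Type*} [NormedAddCommGroup E]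
    [InnerProductSpace ℝ E] {f h : E → ℝ} {x y g d p : E} {α L γ : ℝ} (hγ : 0 < γ)
    (hdesc : f y ≤ f x + ⟪g, y - x⟫ + L / 2 * ‖y - x‖ ^ 2)
    (hsub : h y + ⟪p, x - y⟫ ≤ h x)
    (hmono : α * ‖y - x‖ ^ 2 ≤ ⟪y - x, d⟫)
    (hfoc : 0 ≤ ⟪g + (1 / γ) • d + p, x - y⟫) :
    (α * γ - L * γ ^ 2 / 2) * ‖(1 / γ) • (x - y)‖ ^ 2 ≤ f x + h x - (f y + h y) := by
  have hnorm : ‖(1 / γ) • (x - y)‖ ^ 2 = ‖y - x‖ ^ 2 / γ ^ 2 := by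
    rw [norm_smul, mul_pow, norm_sub_rev, Real.norm_eq_abs, sq_abs]
    ring
  have hyx : x - y = -(y - x) := (neg_sub y x).symm
  simp only [inner_add_left, real_inner_smul_left, hyx, inner_neg_right] at hfoc hsub
  have hscaled : α / γ * ‖y - x‖ ^ 2 ≤ 1 / γ * ⟪d, y - x⟫ := by
    rw [real_inner_comm, div_eq_mul_one_div α, mul_comm α, mul_assoc]
    exact mul_le_mul_of_nonneg_left hmono (by positivity)
  have hcoef : (α * γ - L * γ ^ 2 / 2) * (‖y - x‖ ^ 2 / γ ^ 2)
      = (α / γ - L / 2) * ‖y - x‖ ^ 2 := by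
    field_simp
  rw [hnorm, hcoef]
  linarith

theorem le_div_sum_of_le_of_weighted_sum_le {ι : Type*} {s : Finset ι} {c b : ι → ℝ} {a B : ℝ}
    (hc : ∀ i ∈ s, 0 ≤ c i) (hpos : 0 < ∑ i ∈ s, c i) (ha : ∀ i ∈ s, a ≤ b i)
    (hB : ∑ i ∈ s, c i * b i ≤ B) : a ≤ B / ∑ i ∈ s, c i := by
  rw [le_div_iff₀ hpos, Finset.mul_sum]
  refine le_trans (Finset.sum_le_sum fun i hi => ?_) hB
  rw [mul_comm]
  exact mul_le_mul_of_nonneg_left (ha i hi) (hc i hi)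

theorem step_weight_nonneg {α L γ : ℝ} (hL : 0 < L) (hγ : 0 ≤ γ) (hγL : γ ≤ 2 * α / L) :
    0 ≤ α * γ - L * γ ^ 2 / 2 := by
  rw [le_div_iff₀ hL] at hγL
  nlinarith

theorem step_weight_pos {α L γ : ℝ} (hL : 0 < L) (hγ : 0 < γ) (hγL : γ < 2 * α / L) :
    0 < α * γ - L * γ ^ 2 / 2 := by
  rw [lt_div_iff₀ hL] at hγL
  nlinarith

theorem mem_of_mem_one_of_mem_succ {α : Type*} {X : Set α} {x : ℕ → α} {N : ℕ}
    (h1 : x 1 ∈ X) (hsucc : ∀ k ∈ Finset.Icc 1 N, x (k + 1) ∈ X) :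
    ∀ k ∈ Finset.Icc 1 (N + 1), x k ∈ X := by
  intro k hk
  obtain ⟨hk1, hkN⟩ := Finset.mem_Icc.1 hk
  obtain rfl | hk1 := hk1.eq_or_lt
  · exact h1
  · obtain ⟨j, rfl⟩ : ∃ j, k = j + 1 := ⟨k - 1, by omega⟩
    exact hsucc j (Finset.mem_Icc.2 ⟨by omega, by omega⟩)

theorem sum_Icc_sub_succ_le_sub {F : ℕ → ℝ} {m : ℝ} {N : ℕ} (hN : 1 ≤ N)
    (hm : m ≤ F (N + 1)) : ∑ k ∈ Finset.Icc 1 N, (F k - F (k + 1)) ≤ F 1 - m := by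
  have htelescope : ∑ k ∈ Finset.Icc 1 N, (F k - F (k + 1)) = F 1 - F (N + 1) := by
    rw [← neg_sub (F (N + 1)), ← Finset.sum_Icc_sub hN F, ← Finset.sum_neg_distrib]
    simp only [neg_sub]
  linarith

theorem projected_gradient_algorithm_convergence_general
    {E : Type*} [NormedAddCommGroup E] [InnerProductSpace ℝ E] [FiniteDimensional ℝ E]
    (X : Set E) (hXcv : Convex ℝ X)
    (h : E → ℝ)
    (gw : E → E)
    (α : ℝ)
    (hsc : ∀ x ∈ X, ∀ z ∈ X, α * ‖x - z‖ ^ 2 ≤ ⟪x - z, gw x - gw z⟫)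
    (f : E → ℝ) (f' : E → E) (hf' : ∀ x ∈ X, HasGradientAt f (f' x) x)
    (L : ℝ) (hL : 0 < L)
    (hLip : ∀ x ∈ X, ∀ y ∈ X, ‖f' y - f' x‖ ≤ L * ‖y - x‖)
    -- Ψ* = inf_{x ∈ X} (f + h)(x) is finite
    (Ψstar : ℝ) (hΨstar : IsGLB ((fun z => f z + h z) '' X) Ψstar)
    (N : ℕ) (hN : 1 ≤ N)
    (γ : ℕ → ℝ)
    (hγpos : ∀ k ∈ Finset.Icc 1 N, 0 < γ k)
    (hγub : ∀ k ∈ Finset.Icc 1 N, γ k ≤ 2 * α / L)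
    (hγstrict : ∃ k ∈ Finset.Icc 1 N, γ k < 2 * α / L)
    (x : ℕ → E) (hx1 : x 1 ∈ X)
    (hxX : ∀ k ∈ Finset.Icc 1 N, x (k + 1) ∈ X)
    -- each step satisfies the first-order optimality condition with some p_k ∈ ∂h(x_{k+1})
    (hopt : ∀ k ∈ Finset.Icc 1 N, ∃ p : E,
      (∀ u ∈ X, h (x (k + 1)) + ⟪p, u - x (k + 1)⟫ ≤ h u) ∧
      (∀ u ∈ X, 0 ≤ ⟪f' (x k) + (1 / γ k) • (gw (x (k + 1)) - gw (x k)) + p, u - x (k + 1)⟫))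
    -- g_{X,k} = (x_k - x_{k+1})/γ_k, and R attains the minimum of ‖g_{X,k}‖
    (R : ℕ)
    (hRmin : ∀ k ∈ Finset.Icc 1 N,
      ‖(1 / γ R) • (x R - x (R + 1))‖ ≤ ‖(1 / γ k) • (x k - x (k + 1))‖) :
    ‖(1 / γ R) • (x R - x (R + 1))‖ ^ 2 ≤
      L * ((f (x 1) + h (x 1) - Ψstar) / L)
        / ∑ k ∈ Finset.Icc 1 N, (α * γ k - L * γ k ^ 2 / 2) := by
  
  have hmem := mem_of_mem_one_of_mem_succ hx1 hxX
  have hmem_le (k : ℕ) (hk : k ∈ Finset.Icc 1 N) : x k ∈ X :=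
    hmem k (Finset.Icc_subset_Icc_right N.le_succ hk)
  have hdecrease : ∀ k ∈ Finset.Icc 1 N,
      (α * γ k - L * γ k ^ 2 / 2) * ‖(1 / γ k) • (x k - x (k + 1))‖ ^ 2 ≤
        f (x k) + h (x k) - (f (x (k + 1)) + h (x (k + 1))) := by
    intro k hk
    obtain ⟨p, hsub, hfoc⟩ := hopt k hk
    exact sufficient_decrease_of_prox_step (hγpos k hk)
      (hXcv.le_add_inner_add_sq_of_gradient_lipschitz hf' hLip (hmem_le k hk) (hxX k hk))
      (hsub _ (hmem_le k hk)) (hsc _ (hxX k hk) _ (hmem_le k hk)) (hfoc _ (hmem_le k hk))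
  have htotal := (Finset.sum_le_sum hdecrease).trans
    (sum_Icc_sub_succ_le_sub (F := fun k => f (x k) + h (x k)) hN
      (hΨstar.1 ⟨_, hmem (N + 1) (Finset.right_mem_Icc.2 (by omega)), rfl⟩))
  have hweight (k : ℕ) (hk : k ∈ Finset.Icc 1 N) : 0 ≤ α * γ k - L * γ k ^ 2 / 2 :=
    step_weight_nonneg hL (hγpos k hk).le (hγub k hk)
  obtain ⟨k₀, hk₀, hk₀lt⟩ := hγstrict
  rw [mul_div_cancel₀ _ hL.ne']
  exact le_div_sum_of_le_of_weighted_sum_le hweight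
    (Finset.sum_pos' hweight ⟨k₀, hk₀, step_weight_pos hL (hγpos k₀ hk₀) hk₀lt⟩)
    (fun k hk => pow_le_pow_left₀ (norm_nonneg _) (hRmin k hk) 2) htotal

/-- Theorem 3.1: convergence of the projected gradient (PG) algorithm. If
`0 < γ_k ≤ 2α/L` for all `k` and `γ_k < 2α/L` for at least one `k`, and `R`
minimizes `‖g_{X,k}‖` over `k = 1, …, N`, then
`‖g_{X,R}‖² ≤ L D_Ψ² / Σ_{k=1}^N (αγ_k - Lγ_k²/2)` where `D_Ψ² = (Ψ(x₁) - Ψ*)/L`. -/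
theorem projected_gradient_algorithm_convergence
    {E : Type*} [NormedAddCommGroup E] [InnerProductSpace ℝ E] [FiniteDimensional ℝ E]
    (X : Set E) (hXne : X.Nonempty) (hXcl : IsClosed X) (hXcv : Convex ℝ X)
    (h : E → ℝ) (hh : ConvexOn ℝ X h)
    (w : E → ℝ) (gw : E → E) (hgw : ∀ x ∈ X, HasGradientAt w (gw x) x)
    (α : ℝ) (hα : 0 < α)
    (hsc : ∀ x ∈ X, ∀ z ∈ X, α * ‖x - z‖ ^ 2 ≤ ⟪x - z, gw x - gw z⟫)
    (f : E → ℝ) (f' : E → E) (hf' : ∀ x ∈ X, HasGradientAt f (f' x) x)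
    (L : ℝ) (hL : 0 < L)
    (hLip : ∀ x ∈ X, ∀ y ∈ X, ‖f' y - f' x‖ ≤ L * ‖y - x‖)
    -- Ψ* = inf_{x ∈ X} (f + h)(x) is finite
    (Ψstar : ℝ) (hΨstar : IsGLB ((fun z => f z + h z) '' X) Ψstar)
    (N : ℕ) (hN : 1 ≤ N)
    (γ : ℕ → ℝ)
    (hγpos : ∀ k ∈ Finset.Icc 1 N, 0 < γ k)
    (hγub : ∀ k ∈ Finset.Icc 1 N, γ k ≤ 2 * α / L)
    (hγstrict : ∃ k ∈ Finset.Icc 1 N, γ k < 2 * α / L)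
    (x : ℕ → E) (hx1 : x 1 ∈ X)
    (hxX : ∀ k ∈ Finset.Icc 1 N, x (k + 1) ∈ X)
    -- x_{k+1} is a minimizer over u ∈ X of ⟨∇f(x_k), u⟩ + (1/γ_k) V(u, x_k) + h(u)
    (hmin : ∀ k ∈ Finset.Icc 1 N, ∀ u ∈ X,
      ⟪f' (x k), x (k + 1)⟫
          + (1 / γ k) * (w (x (k + 1)) - w (x k) - ⟪gw (x k), x (k + 1) - x k⟫)
          + h (x (k + 1)) ≤
        ⟪f' (x k), u⟫ + (1 / γ k) * (w u - w (x k) - ⟪gw (x k), u - x k⟫) + h u)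
    -- each step satisfies the first-order optimality condition with some p_k ∈ ∂h(x_{k+1})
    (hopt : ∀ k ∈ Finset.Icc 1 N, ∃ p : E,
      (∀ u ∈ X, h (x (k + 1)) + ⟪p, u - x (k + 1)⟫ ≤ h u) ∧
      (∀ u ∈ X, 0 ≤ ⟪f' (x k) + (1 / γ k) • (gw (x (k + 1)) - gw (x k)) + p, u - x (k + 1)⟫))
    -- g_{X,k} = (x_k - x_{k+1})/γ_k, and R attains the minimum of ‖g_{X,k}‖
    (R : ℕ) (hR : R ∈ Finset.Icc 1 N)
    (hRmin : ∀ k ∈ Finset.Icc 1 N,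
      ‖(1 / γ R) • (x R - x (R + 1))‖ ≤ ‖(1 / γ k) • (x k - x (k + 1))‖) :
    ‖(1 / γ R) • (x R - x (R + 1))‖ ^ 2 ≤
      L * ((f (x 1) + h (x 1) - Ψstar) / L)
        / ∑ k ∈ Finset.Icc 1 N, (α * γ k - L * γ k ^ 2 / 2) :=
  projected_gradient_algorithm_convergence_general X hXcv h gw α hsc f f' hf' L hL hLip Ψstar hΨstar
    N hN γ hγpos hγub hγstrict x hx1 hxX hopt R hRmin
end

section
/- Consider the projected gradient (PG) algorithm with constant stepsizes γ_k = α/L for all k = 1, …, N: given x₁ ∈ X, iteratively define x_{k+1} as a minimizer over u ∈ X of ⟨∇f(x_k), u⟩ + (L/α)V(u, x_k) + h(u) (each step satisfying its first-order optimality condition), and set g_{X,k} = (L/α)(x_k − x_{k+1}). Let R ∈ {1, …, N} attain the minimum of ‖g_{X,k}‖ over k = 1, …, N. Then ‖g_{X,R}‖² ≤ 2L²D_Ψ²/(α²N), where D_Ψ = ((Ψ(x₁) − Ψ*)/L)^{1/2}. -/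
open RealInnerProductSpace

/-! With stepsize `α/L`, testing the optimality condition of step `k` at `u = x_k`
and combining it with the `α`-strong monotonicity of `∇ω`, the subgradient inequality for `h` and
the descent lemma for `f` gives the sufficient decrease `Ψ(x_{k+1}) + (L/2)‖x_k - x_{k+1}‖² ≤ Ψ(x_k)`,
i.e. `Ψ(x_k) - Ψ(x_{k+1}) ≥ (α²/2L)‖g_{X,k}‖² ≥ (α²/2L)‖g_{X,R}‖²`. Summing over `k` telescopes to
`N (α²/2L)‖g_{X,R}‖² ≤ Ψ(x₁) - Ψ(x_{N+1}) ≤ Ψ(x₁) - Ψ*`. -/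

section

variable {E : Type*} [NormedAddCommGroup E] [InnerProductSpace ℝ E]
  {X : Set E} {f : E → ℝ} {f' : E → E} {L : ℝ}

lemma Convex.inner_gradient_sub_le_of_lipschitz (hXcv : Convex ℝ X)
    (hLip : ∀ x ∈ X, ∀ y ∈ X, ‖f' y - f' x‖ ≤ L * ‖y - x‖)
    {x y : E} (hx : x ∈ X) (hy : y ∈ X) {t : ℝ} (ht : t ∈ Set.Icc (0 : ℝ) 1) :
    ⟪f' (x + t • (y - x)), y - x⟫ - ⟪f' x, y - x⟫ ≤ L * t * ‖y - x‖ ^ 2 := by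
  rw [← inner_sub_left]
  calc ⟪f' (x + t • (y - x)) - f' x, y - x⟫
      ≤ ‖f' (x + t • (y - x)) - f' x‖ * ‖y - x‖ := real_inner_le_norm _ _
    _ ≤ L * ‖x + t • (y - x) - x‖ * ‖y - x‖ := by
        gcongr; exact hLip x hx _ (hXcv.add_smul_sub_mem hx hy ht)
    _ = L * t * ‖y - x‖ ^ 2 := by
        rw [add_sub_cancel_left, norm_smul, Real.norm_of_nonneg ht.1]; ring

lemma Convex.le_add_inner_add_sq_of_lipschitz_gradient [CompleteSpace E] (hXcv : Convex ℝ X)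
    (hf' : ∀ x ∈ X, HasGradientAt f (f' x) x)
    (hLip : ∀ x ∈ X, ∀ y ∈ X, ‖f' y - f' x‖ ≤ L * ‖y - x‖)
    {x y : E} (hx : x ∈ X) (hy : y ∈ X) :
    f y ≤ f x + ⟪f' x, y - x⟫ + L / 2 * ‖y - x‖ ^ 2 := by
  set d := y - x
  set φ : ℝ → ℝ := fun t => f (x + t • d) - t * ⟪f' x, d⟫ - L / 2 * t ^ 2 * ‖d‖ ^ 2
  have hφ' : ∀ t ∈ Set.Icc (0 : ℝ) 1,
      HasDerivAt φ (⟪f' (x + t • d), d⟫ - ⟪f' x, d⟫ - L * t * ‖d‖ ^ 2) t := by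
    intro t ht
    have hline : HasDerivAt (fun s : ℝ => x + s • d) d t := by
      simpa using ((hasDerivAt_id t).smul_const d).const_add x
    have hf_line : HasDerivAt (fun s : ℝ => f (x + s • d)) ⟪f' (x + t • d), d⟫ t := by
      have hmem : x + t • d ∈ X := hXcv.add_smul_sub_mem hx hy ht
      have := (hf' _ hmem).hasFDerivAt.comp_hasDerivAt t hline
      simp only [InnerProductSpace.toDual_apply_apply] at this
      exact this
    have hquad : HasDerivAt (fun s : ℝ => L / 2 * s ^ 2 * ‖d‖ ^ 2) (L * t * ‖d‖ ^ 2) t :=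
      (((hasDerivAt_pow 2 t).const_mul (L / 2)).mul_const (‖d‖ ^ 2)).congr_deriv
        (by push_cast; ring)
    exact (hf_line.sub ((hasDerivAt_id t).mul_const _)).sub hquad |>.congr_deriv (by simp)
  have hanti : AntitoneOn φ (Set.Icc 0 1) := by
    refine antitoneOn_of_deriv_nonpos (convex_Icc 0 1)
      (fun t ht => (hφ' t ht).continuousAt.continuousWithinAt) (fun t ht => ?_) (fun t ht => ?_)
    all_goals rw [interior_Icc] at ht
    · exact (hφ' t (Set.Ioo_subset_Icc_self ht)).differentiableAt.differentiableWithinAt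
    · rw [(hφ' t (Set.Ioo_subset_Icc_self ht)).deriv, sub_nonpos]
      exact hXcv.inner_gradient_sub_le_of_lipschitz hLip hx hy (Set.Ioo_subset_Icc_self ht)
  have h01 : φ 1 ≤ φ 0 := hanti (by simp) (by simp) zero_le_one
  simp only [φ, d, one_smul, add_sub_cancel, zero_smul, add_zero] at h01
  linarith

lemma sufficient_decrease_of_prox_step_s6 [CompleteSpace E] (hXcv : Convex ℝ X)
    (hf' : ∀ x ∈ X, HasGradientAt f (f' x) x)
    (hLip : ∀ x ∈ X, ∀ y ∈ X, ‖f' y - f' x‖ ≤ L * ‖y - x‖)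
    {ω' : E → E} {h : E → ℝ} {α c : ℝ} (hc : 0 ≤ c) {x y p : E} (hx : x ∈ X) (hy : y ∈ X)
    (hsc : α * ‖y - x‖ ^ 2 ≤ ⟪y - x, ω' y - ω' x⟫)
    (hp : h y + ⟪p, x - y⟫ ≤ h x)
    (hopt : 0 ≤ ⟪f' x + c • (ω' y - ω' x) + p, x - y⟫) :
    f y + h y + (c * α - L / 2) * ‖x - y‖ ^ 2 ≤ f x + h x := by
  have hdescent := hXcv.le_add_inner_add_sq_of_lipschitz_gradient hf' hLip hx hy
  have hmono : c * ⟪ω' y - ω' x, x - y⟫ ≤ -(c * α * ‖x - y‖ ^ 2) := by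
    rw [norm_sub_rev, ← neg_sub y x, inner_neg_right, real_inner_comm (y - x)]
    linarith [mul_le_mul_of_nonneg_left hsc hc]
  rw [inner_add_left, inner_add_left, real_inner_smul_left] at hopt
  rw [norm_sub_rev, ← neg_sub x y, inner_neg_right] at hdescent
  linarith

end

lemma mul_le_sub_of_forall_le_sub_succ {a : ℕ → ℝ} {c : ℝ} {N : ℕ}
    (h : ∀ k < N, c ≤ a k - a (k + 1)) : N * c ≤ a 0 - a N := by
  calc N * c = ∑ _k ∈ Finset.range N, c := by simp
    _ ≤ ∑ k ∈ Finset.range N, (a k - a (k + 1)) :=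
        Finset.sum_le_sum fun k hk => h k (Finset.mem_range.1 hk)
    _ = a 0 - a N := Finset.sum_range_sub' a N

theorem projected_gradient_algorithm_constant_stepsize_general
    {E : Type*} [NormedAddCommGroup E] [InnerProductSpace ℝ E] [FiniteDimensional ℝ E]
    (X : Set E) (hXcv : Convex ℝ X)
    (h : E → ℝ)
    (gw : E → E)
    (α : ℝ) (hα : 0 < α)
    (hsc : ∀ x ∈ X, ∀ z ∈ X, α * ‖x - z‖ ^ 2 ≤ ⟪x - z, gw x - gw z⟫)
    (f : E → ℝ) (f' : E → E) (hf' : ∀ x ∈ X, HasGradientAt f (f' x) x)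
    (L : ℝ) (hL : 0 < L)
    (hLip : ∀ x ∈ X, ∀ y ∈ X, ‖f' y - f' x‖ ≤ L * ‖y - x‖)
    -- Ψ* = inf_{x ∈ X} (f + h)(x) is finite
    (Ψstar : ℝ) (hΨstar : IsGLB ((fun z => f z + h z) '' X) Ψstar)
    (N : ℕ) (hN : 1 ≤ N)
    (x : ℕ → E) (hx1 : x 1 ∈ X)
    (hxX : ∀ k ∈ Finset.Icc 1 N, x (k + 1) ∈ X)
    -- each step satisfies the first-order optimality condition with some p_k ∈ ∂h(x_{k+1})
    (hopt : ∀ k ∈ Finset.Icc 1 N, ∃ p : E,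
      (∀ u ∈ X, h (x (k + 1)) + ⟪p, u - x (k + 1)⟫ ≤ h u) ∧
      (∀ u ∈ X, 0 ≤ ⟪f' (x k) + (L / α) • (gw (x (k + 1)) - gw (x k)) + p, u - x (k + 1)⟫))
    -- g_{X,k} = (L/α)(x_k - x_{k+1}), and R attains the minimum of ‖g_{X,k}‖
    (R : ℕ)
    (hRmin : ∀ k ∈ Finset.Icc 1 N,
      ‖(L / α) • (x R - x (R + 1))‖ ≤ ‖(L / α) • (x k - x (k + 1))‖) :
    ‖(L / α) • (x R - x (R + 1))‖ ^ 2 ≤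
      2 * L ^ 2 * ((f (x 1) + h (x 1) - Ψstar) / L) / (α ^ 2 * N) := by
  set Ψ : E → ℝ := fun z => f z + h z
  have hLα : 0 < L / α := div_pos hL hα
  simp only [norm_smul, Real.norm_of_nonneg hLα.le] at hRmin ⊢
  set r := ‖x R - x (R + 1)‖
  have hX : ∀ k ≤ N, x (k + 1) ∈ X := by
    rintro (_ | k) hk
    · exact hx1
    · exact hxX (k + 1) (Finset.mem_Icc.2 ⟨by omega, hk⟩)
  have hdec : ∀ k < N, L / 2 * r ^ 2 ≤ Ψ (x (k + 1)) - Ψ (x (k + 1 + 1)) := by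
    intro k hk
    have hk' : k + 1 ∈ Finset.Icc 1 N := Finset.mem_Icc.2 ⟨by omega, hk⟩
    obtain ⟨p, hp, hfo⟩ := hopt (k + 1) hk'
    have hstep := sufficient_decrease_of_prox_step_s6 hXcv hf' hLip hLα.le (hX k hk.le)
      (hX (k + 1) hk) (hsc _ (hX (k + 1) hk) _ (hX k hk.le)) (hp _ (hX k hk.le)) (hfo _ (hX k hk.le))
    have hr : r ≤ ‖x (k + 1) - x (k + 1 + 1)‖ := le_of_mul_le_mul_left (hRmin (k + 1) hk') hLα
    rw [div_mul_cancel₀ L hα.ne'] at hstep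
    have hr2 : L / 2 * r ^ 2 ≤ L / 2 * ‖x (k + 1) - x (k + 1 + 1)‖ ^ 2 := by gcongr
    simp only [Ψ]
    linarith
  have hsum := mul_le_sub_of_forall_le_sub_succ (a := fun k => Ψ (x (k + 1))) hdec
  have hlow : Ψstar ≤ Ψ (x (N + 1)) := hΨstar.1 ⟨_, hX N le_rfl, rfl⟩
  have hNpos : (0 : ℝ) < N := by exact_mod_cast hN
  rw [le_div_iff₀ (by positivity)]
  field_simp
  simp only [Ψ, zero_add] at hsum hlow
  linarith

/-- Corollary 3.2: the PG algorithm with constant stepsizes `γ_k = α/L` satisfies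
`‖g_{X,R}‖² ≤ 2L²D_Ψ²/(α²N)` where `D_Ψ² = (Ψ(x₁) - Ψ*)/L` and
`g_{X,k} = (L/α)(x_k - x_{k+1})`. -/
theorem projected_gradient_algorithm_constant_stepsize
    {E : Type*} [NormedAddCommGroup E] [InnerProductSpace ℝ E] [FiniteDimensional ℝ E]
    (X : Set E) (hXne : X.Nonempty) (hXcl : IsClosed X) (hXcv : Convex ℝ X)
    (h : E → ℝ) (hh : ConvexOn ℝ X h)
    (w : E → ℝ) (gw : E → E) (hgw : ∀ x ∈ X, HasGradientAt w (gw x) x)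
    (α : ℝ) (hα : 0 < α)
    (hsc : ∀ x ∈ X, ∀ z ∈ X, α * ‖x - z‖ ^ 2 ≤ ⟪x - z, gw x - gw z⟫)
    (f : E → ℝ) (f' : E → E) (hf' : ∀ x ∈ X, HasGradientAt f (f' x) x)
    (L : ℝ) (hL : 0 < L)
    (hLip : ∀ x ∈ X, ∀ y ∈ X, ‖f' y - f' x‖ ≤ L * ‖y - x‖)
    -- Ψ* = inf_{x ∈ X} (f + h)(x) is finite
    (Ψstar : ℝ) (hΨstar : IsGLB ((fun z => f z + h z) '' X) Ψstar)
    (N : ℕ) (hN : 1 ≤ N)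
    (x : ℕ → E) (hx1 : x 1 ∈ X)
    (hxX : ∀ k ∈ Finset.Icc 1 N, x (k + 1) ∈ X)
    -- x_{k+1} is a minimizer over u ∈ X of ⟨∇f(x_k), u⟩ + (L/α) V(u, x_k) + h(u)
    (hmin : ∀ k ∈ Finset.Icc 1 N, ∀ u ∈ X,
      ⟪f' (x k), x (k + 1)⟫
          + (L / α) * (w (x (k + 1)) - w (x k) - ⟪gw (x k), x (k + 1) - x k⟫)
          + h (x (k + 1)) ≤
        ⟪f' (x k), u⟫ + (L / α) * (w u - w (x k) - ⟪gw (x k), u - x k⟫) + h u)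
    -- each step satisfies the first-order optimality condition with some p_k ∈ ∂h(x_{k+1})
    (hopt : ∀ k ∈ Finset.Icc 1 N, ∃ p : E,
      (∀ u ∈ X, h (x (k + 1)) + ⟪p, u - x (k + 1)⟫ ≤ h u) ∧
      (∀ u ∈ X, 0 ≤ ⟪f' (x k) + (L / α) • (gw (x (k + 1)) - gw (x k)) + p, u - x (k + 1)⟫))
    -- g_{X,k} = (L/α)(x_k - x_{k+1}), and R attains the minimum of ‖g_{X,k}‖
    (R : ℕ) (hR : R ∈ Finset.Icc 1 N)
    (hRmin : ∀ k ∈ Finset.Icc 1 N,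
      ‖(L / α) • (x R - x (R + 1))‖ ≤ ‖(L / α) • (x k - x (k + 1))‖) :
    ‖(L / α) • (x R - x (R + 1))‖ ^ 2 ≤
      2 * L ^ 2 * ((f (x 1) + h (x 1) - Ψstar) / L) / (α ^ 2 * N) :=
  projected_gradient_algorithm_constant_stepsize_general X hXcv h gw α hα hsc f f' hf' L hL hLip
    Ψstar hΨstar N hN x hx1 hxX hopt R hRmin
end

section
/- Let x₁ ∈ X, let γ₁, …, γ_N satisfy 0 < γ_k ≤ α/L for all k, let δ₁, …, δ_N ∈ E be arbitrary vectors, and set G_k = ∇f(x_k) + δ_k. Iteratively define x_{k+1} as a minimizer over u ∈ X of ⟨G_k, u⟩ + (1/γ_k)V(u, x_k) + h(u), and assume at each step both this minimizer and the generalized projection with the exact gradient ∇f(x_k) satisfy their first-order optimality conditions. Set g̃_{X,k} = (x_k − x_{k+1})/γ_k and g_{X,k} = P_X(x_k, ∇f(x_k), γ_k). Then Σ_{k=1}^N (αγ_k − Lγ_k²)‖g̃_{X,k}‖² ≤ Ψ(x₁) − Ψ* + Σ_{k=1}^N (γ_k⟨δ_k, g_{X,k}⟩ + (γ_k/α)‖δ_k‖²).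 -/
open RealInnerProductSpace


lemma tele_sum (F : ℕ → ℝ) : ∀ N : ℕ, ∑ k ∈ Finset.Icc 1 N, (F k - F (k+1)) = F 1 - F (N+1)
  | 0 => by simp
  | (n+1) => by
      rw [Finset.sum_Icc_succ_top (by omega), tele_sum F n]; ring

lemma rspg_descent {E : Type*} [NormedAddCommGroup E] [InnerProductSpace ℝ E]
    [FiniteDimensional ℝ E]
    (X : Set E) (hXcv : Convex ℝ X)
    (f : E → ℝ) (f' : E → E) (hf' : ∀ x ∈ X, HasGradientAt f (f' x) x)
    (L : ℝ) (hL : 0 < L)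
    (hLip : ∀ x ∈ X, ∀ y ∈ X, ‖f' y - f' x‖ ≤ L * ‖y - x‖)
    (a b : E) (ha : a ∈ X) (hb : b ∈ X) :
    f b - f a - ⟪f' a, b - a⟫ ≤ L * ‖b - a‖ ^ 2 := by
  set s := segment ℝ a b with hs
  have hsX : s ⊆ X := hXcv.segment_subset ha hb
  have hseg : ∀ u ∈ s, ‖u - a‖ ≤ ‖b - a‖ := by
    intro u hu
    rw [hs, segment_eq_image'] at hu
    obtain ⟨t, ht, rfl⟩ := hu
    simp only [add_sub_cancel_left, norm_smul, Real.norm_eq_abs,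
      abs_of_nonneg ht.1]
    nlinarith [norm_nonneg (b - a), ht.2]
  have key := (convex_segment a b).norm_image_sub_le_of_norm_hasFDerivWithin_le'
    (f' := fun u => InnerProductSpace.toDual ℝ E (f' u))
    (φ := InnerProductSpace.toDual ℝ E (f' a)) (C := L * ‖b - a‖) (f := f)
    (fun u hu => ((hf' u (hsX hu)).hasFDerivAt).hasFDerivWithinAt)
    (fun u hu => by
      rw [← map_sub, LinearIsometryEquiv.norm_map]
      calc ‖f' u - f' a‖ ≤ L * ‖u - a‖ := hLip a ha u (hsX hu)
        _ ≤ L * ‖b - a‖ := by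
            exact mul_le_mul_of_nonneg_left (hseg u hu) hL.le)
    (left_mem_segment ℝ a b) (right_mem_segment ℝ a b)
  rw [InnerProductSpace.toDual_apply_apply, Real.norm_eq_abs] at key
  have h2 := (abs_le.mp key).2
  nlinarith [h2]

set_option maxHeartbeats 1000000 in

lemma rspg_step {E : Type*} [NormedAddCommGroup E] [InnerProductSpace ℝ E]
    (α L γ : ℝ) (hα : 0 < α) (hγ : 0 < γ)
    (a b e d g p₁ p₂ : E) (wa wb we : E) (Fa Fb ha hb he : ℝ)
    (hscba : α * ‖b - a‖ ^ 2 ≤ ⟪b - a, wb - wa⟫)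
    (hscbe : α * ‖b - e‖ ^ 2 ≤ ⟪b - e, wb - we⟫)
    (hp₁a : hb + ⟪p₁, a - b⟫ ≤ ha)
    (hp₁e : hb + ⟪p₁, e - b⟫ ≤ he)
    (hp₂b : he + ⟪p₂, b - e⟫ ≤ hb)
    (ho₁a : 0 ≤ ⟪(g + d) + (1/γ) • (wb - wa) + p₁, a - b⟫)
    (ho₁e : 0 ≤ ⟪(g + d) + (1/γ) • (wb - wa) + p₁, e - b⟫)
    (ho₂b : 0 ≤ ⟪g + (1/γ) • (we - wa) + p₂, b - e⟫)
    (hdesc : Fb - Fa - ⟪g, b - a⟫ ≤ L * ‖b - a‖ ^ 2) :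
    (α * γ - L * γ ^ 2) * ‖(1/γ) • (a - b)‖ ^ 2 ≤
      (Fa + ha) - (Fb + hb) + (γ * ⟪d, (1/γ) • (a - e)⟫ + (γ / α) * ‖d‖ ^ 2) := by
  have hγne : γ ≠ 0 := hγ.ne'
  -- expand the optimality inner products
  have e1 : ⟪(g + d) + (1/γ) • (wb - wa) + p₁, a - b⟫
      = ⟪g, a - b⟫ + ⟪d, a - b⟫ + (1/γ) * ⟪wb - wa, a - b⟫ + ⟪p₁, a - b⟫ := by
    simp [inner_add_left, real_inner_smul_left]
  have e2 : ⟪(g + d) + (1/γ) • (wb - wa) + p₁, e - b⟫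
      = ⟪g, e - b⟫ + ⟪d, e - b⟫ + (1/γ) * ⟪wb - wa, e - b⟫ + ⟪p₁, e - b⟫ := by
    simp [inner_add_left, real_inner_smul_left]
  have e3 : ⟪g + (1/γ) • (we - wa) + p₂, b - e⟫
      = ⟪g, b - e⟫ + (1/γ) * ⟪we - wa, b - e⟫ + ⟪p₂, b - e⟫ := by
    simp [inner_add_left, real_inner_smul_left]
  -- sign flips
  have sgn1 : ⟪wb - wa, a - b⟫ = -⟪b - a, wb - wa⟫ := by
    rw [real_inner_comm, show a - b = -(b - a) from (neg_sub b a).symm, inner_neg_left]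
  have sgn2 : ⟪g, b - e⟫ = -⟪g, e - b⟫ := by
    rw [show b - e = -(e - b) from (neg_sub e b).symm, inner_neg_right]
  have sgn3 : ⟪g, b - a⟫ = -⟪g, a - b⟫ := by
    rw [show b - a = -(a - b) from (neg_sub a b).symm, inner_neg_right]
  have sgn4 : ⟪d, e - b⟫ = -⟪d, b - e⟫ := by
    rw [show e - b = -(b - e) from (neg_sub b e).symm, inner_neg_right]
  -- combine gw-terms for the cross inequality
  have gwcomb : ⟪wb - wa, e - b⟫ + ⟪we - wa, b - e⟫ = -⟪b - e, wb - we⟫ := by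
    have h1 : ⟪we - wa, b - e⟫ = -⟪we - wa, e - b⟫ := by
      rw [show b - e = -(e - b) from (neg_sub e b).symm, inner_neg_right]
    calc ⟪wb - wa, e - b⟫ + ⟪we - wa, b - e⟫
        = ⟪(wb - wa) - (we - wa), e - b⟫ := by
          rw [h1]; simp only [inner_sub_left]; ring
      _ = ⟪wb - we, e - b⟫ := by rw [show (wb - wa) - (we - wa) = wb - we by abel]
      _ = -⟪b - e, wb - we⟫ := by
          rw [real_inner_comm, show (e - b : E) = -(b - e) from (neg_sub b e).symm,
            inner_neg_left]
  have nba : ‖b - a‖ = ‖a - b‖ := norm_sub_rev b a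
  -- I1
  have I1 : α * (1/γ) * ‖a - b‖ ^ 2 ≤ ⟪g, a - b⟫ + ⟪d, a - b⟫ + (ha - hb) := by
    rw [e1] at ho₁a
    have t1 : (1/γ) * ⟪wb - wa, a - b⟫ ≤ (1/γ) * (-(α * ‖a - b‖ ^ 2)) := by
      apply mul_le_mul_of_nonneg_left _ (by positivity)
      rw [sgn1]; rw [nba] at hscba; linarith
    linarith [t1, hp₁a]
  -- I2
  have I2 : ⟪g, a - b⟫ ≤ Fa - Fb + L * ‖a - b‖ ^ 2 := by
    rw [sgn3, nba] at hdesc; linarith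
  -- I3 : cross inequality
  have I3 : α * (1/γ) * ‖b - e‖ ^ 2 ≤ ⟪d, e - b⟫ := by
    rw [e2] at ho₁e; rw [e3] at ho₂b
    have sum := add_le_add ho₁e ho₂b
    have t2 : (1/γ) * ⟪wb - wa, e - b⟫ + (1/γ) * ⟪we - wa, b - e⟫
        ≤ (1/γ) * (-(α * ‖b - e‖ ^ 2)) := by
      rw [← mul_add, gwcomb]
      apply mul_le_mul_of_nonneg_left _ (by positivity)
      linarith
    linarith [t2, sgn2, hp₁e, hp₂b]
  -- I4 : Cauchy-Schwarz
  have I4 : ⟪d, e - b⟫ ≤ ‖d‖ * ‖b - e‖ := by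
    calc ⟪d, e - b⟫ ≤ ‖d‖ * ‖e - b‖ := real_inner_le_norm d (e - b)
      _ = ‖d‖ * ‖b - e‖ := by rw [norm_sub_rev]
  -- I5
  have I5 : ⟪d, e - b⟫ ≤ (γ / α) * ‖d‖ ^ 2 := by
    have h3 : α * ‖b - e‖ ^ 2 ≤ γ * ⟪d, e - b⟫ := by
      have := mul_le_mul_of_nonneg_left I3 hγ.le
      calc α * ‖b - e‖ ^ 2 = γ * (α * (1/γ) * ‖b - e‖ ^ 2) := by field_simp
        _ ≤ γ * ⟪d, e - b⟫ := this
    have hc : (0:ℝ) ≤ 2 * α * γ := by positivity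
    have h4 := mul_le_mul_of_nonneg_left I4 hc
    have key : α * ⟪d, e - b⟫ ≤ γ * ‖d‖ ^ 2 := by
      nlinarith [sq_nonneg (γ * ‖d‖ - α * ‖b - e‖), h4, h3]
    rw [div_mul_eq_mul_div, le_div_iff₀ hα]
    linarith
  -- I6
  have I6 : ⟪d, a - b⟫ = ⟪d, a - e⟫ + ⟪d, e - b⟫ := by
    rw [← inner_add_right, show (a - e) + (e - b) = a - b by abel]
  -- final assembly
  have lhs_eq : (α * γ - L * γ ^ 2) * ‖(1/γ) • (a - b)‖ ^ 2
      = α * (1/γ) * ‖a - b‖ ^ 2 - L * ‖a - b‖ ^ 2 := by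
    rw [norm_smul, Real.norm_eq_abs, abs_of_pos (by positivity : (0:ℝ) < 1/γ)]
    field_simp
  have rhs_eq : γ * ⟪d, (1/γ) • (a - e)⟫ = ⟪d, a - e⟫ := by
    rw [real_inner_smul_right]; field_simp
  rw [lhs_eq, rhs_eq]
  linarith [I1, I2, I5, I6.le, I6.ge]

/-- The key recursion (4.14) of the RSPG analysis: with `G_k = ∇f(x_k) + δ_k`,
`Σ_{k=1}^N (αγ_k - Lγ_k²) ‖g̃_{X,k}‖² ≤ Ψ(x₁) - Ψ* + Σ_{k=1}^N (γ_k ⟨δ_k, g_{X,k}⟩ + (γ_k/α)‖δ_k‖²)`,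
where `g̃_{X,k} = (x_k - x_{k+1})/γ_k` and `g_{X,k} = P_X(x_k, ∇f(x_k), γ_k)`. -/
theorem rspg_key_recursion
    {E : Type*} [NormedAddCommGroup E] [InnerProductSpace ℝ E] [FiniteDimensional ℝ E]
    (X : Set E) (hXne : X.Nonempty) (hXcl : IsClosed X) (hXcv : Convex ℝ X)
    (h : E → ℝ) (hh : ConvexOn ℝ X h)
    (w : E → ℝ) (gw : E → E) (hgw : ∀ x ∈ X, HasGradientAt w (gw x) x)
    (α : ℝ) (hα : 0 < α)
    (hsc : ∀ x ∈ X, ∀ z ∈ X, α * ‖x - z‖ ^ 2 ≤ ⟪x - z, gw x - gw z⟫)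
    (f : E → ℝ) (f' : E → E) (hf' : ∀ x ∈ X, HasGradientAt f (f' x) x)
    (L : ℝ) (hL : 0 < L)
    (hLip : ∀ x ∈ X, ∀ y ∈ X, ‖f' y - f' x‖ ≤ L * ‖y - x‖)
    -- Ψ* = inf_{x ∈ X} (f + h)(x) is finite
    (Ψstar : ℝ) (hΨstar : IsGLB ((fun z => f z + h z) '' X) Ψstar)
    (N : ℕ) (hN : 1 ≤ N)
    (γ : ℕ → ℝ)
    (hγpos : ∀ k ∈ Finset.Icc 1 N, 0 < γ k)
    (hγub : ∀ k ∈ Finset.Icc 1 N, γ k ≤ α / L)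
    (δ : ℕ → E)
    (x : ℕ → E) (hx1 : x 1 ∈ X)
    (hxX : ∀ k ∈ Finset.Icc 1 N, x (k + 1) ∈ X)
    -- x_{k+1} is a minimizer over u ∈ X of ⟨G_k, u⟩ + (1/γ_k) V(u, x_k) + h(u),
    -- where G_k = ∇f(x_k) + δ_k
    (hmin : ∀ k ∈ Finset.Icc 1 N, ∀ u ∈ X,
      ⟪f' (x k) + δ k, x (k + 1)⟫
          + (1 / γ k) * (w (x (k + 1)) - w (x k) - ⟪gw (x k), x (k + 1) - x k⟫)
          + h (x (k + 1)) ≤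
        ⟪f' (x k) + δ k, u⟫ + (1 / γ k) * (w u - w (x k) - ⟪gw (x k), u - x k⟫) + h u)
    (hopt : ∀ k ∈ Finset.Icc 1 N, ∃ p : E,
      (∀ u ∈ X, h (x (k + 1)) + ⟪p, u - x (k + 1)⟫ ≤ h u) ∧
      (∀ u ∈ X, 0 ≤ ⟪(f' (x k) + δ k) + (1 / γ k) • (gw (x (k + 1)) - gw (x k)) + p,
        u - x (k + 1)⟫))
    -- xe_k is the generalized projection at x_k with the exact gradient ∇f(x_k),
    -- so that g_{X,k} = (x_k - xe_k)/γ_k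
    (xe : ℕ → E)
    (hxeX : ∀ k ∈ Finset.Icc 1 N, xe k ∈ X)
    (hmine : ∀ k ∈ Finset.Icc 1 N, ∀ u ∈ X,
      ⟪f' (x k), xe k⟫ + (1 / γ k) * (w (xe k) - w (x k) - ⟪gw (x k), xe k - x k⟫) + h (xe k) ≤
        ⟪f' (x k), u⟫ + (1 / γ k) * (w u - w (x k) - ⟪gw (x k), u - x k⟫) + h u)
    (hopte : ∀ k ∈ Finset.Icc 1 N, ∃ p : E,
      (∀ u ∈ X, h (xe k) + ⟪p, u - xe k⟫ ≤ h u) ∧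
      (∀ u ∈ X, 0 ≤ ⟪f' (x k) + (1 / γ k) • (gw (xe k) - gw (x k)) + p, u - xe k⟫)) :
    ∑ k ∈ Finset.Icc 1 N, (α * γ k - L * γ k ^ 2) * ‖(1 / γ k) • (x k - x (k + 1))‖ ^ 2 ≤
      (f (x 1) + h (x 1)) - Ψstar
        + ∑ k ∈ Finset.Icc 1 N,
            (γ k * ⟪δ k, (1 / γ k) • (x k - xe k)⟫ + (γ k / α) * ‖δ k‖ ^ 2) := by
  have hxmem : ∀ k, 1 ≤ k → k ≤ N + 1 → x k ∈ X := by
    intro k h1 h2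
    rcases k with _ | k
    · omega
    rcases k with _ | j
    · exact hx1
    · exact hxX (j + 1) (Finset.mem_Icc.mpr ⟨by omega, by omega⟩)
  have step : ∀ k ∈ Finset.Icc 1 N,
      (α * γ k - L * γ k ^ 2) * ‖(1 / γ k) • (x k - x (k + 1))‖ ^ 2 ≤
        ((f (x k) + h (x k)) - (f (x (k + 1)) + h (x (k + 1))))
          + (γ k * ⟪δ k, (1 / γ k) • (x k - xe k)⟫ + (γ k / α) * ‖δ k‖ ^ 2) := by
    intro k hk
    obtain ⟨p₁, hp₁, ho₁⟩ := hopt k hk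
    obtain ⟨p₂, hp₂, ho₂⟩ := hopte k hk
    have hkIcc := Finset.mem_Icc.mp hk
    have haX : x k ∈ X := hxmem k hkIcc.1 (by omega)
    have hbX : x (k + 1) ∈ X := hxX k hk
    have heX : xe k ∈ X := hxeX k hk
    have hdesc := rspg_descent X hXcv f f' hf' L hL hLip (x k) (x (k + 1)) haX hbX
    exact rspg_step α L (γ k) hα (hγpos k hk) (x k) (x (k + 1)) (xe k) (δ k) (f' (x k)) p₁ p₂
      (gw (x k)) (gw (x (k + 1))) (gw (xe k)) (f (x k)) (f (x (k + 1)))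
      (h (x k)) (h (x (k + 1))) (h (xe k))
      (hsc _ hbX _ haX) (hsc _ hbX _ heX) (hp₁ _ haX) (hp₁ _ heX) (hp₂ _ hbX)
      (ho₁ _ haX) (ho₁ _ heX) (ho₂ _ hbX) hdesc
  have hlb : Ψstar ≤ f (x (N + 1)) + h (x (N + 1)) :=
    hΨstar.1 ⟨x (N + 1), hxmem (N + 1) (by omega) le_rfl, rfl⟩
  calc ∑ k ∈ Finset.Icc 1 N, (α * γ k - L * γ k ^ 2) * ‖(1 / γ k) • (x k - x (k + 1))‖ ^ 2
      ≤ ∑ k ∈ Finset.Icc 1 N,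
          (((f (x k) + h (x k)) - (f (x (k + 1)) + h (x (k + 1))))
            + (γ k * ⟪δ k, (1 / γ k) • (x k - xe k)⟫ + (γ k / α) * ‖δ k‖ ^ 2)) :=
        Finset.sum_le_sum step
    _ = ((f (x 1) + h (x 1)) - (f (x (N + 1)) + h (x (N + 1))))
          + ∑ k ∈ Finset.Icc 1 N,
              (γ k * ⟪δ k, (1 / γ k) • (x k - xe k)⟫ + (γ k / α) * ‖δ k‖ ^ 2) := by
        rw [Finset.sum_add_distrib, tele_sum (fun k => f (x k) + h (x k)) N]
    _ ≤ (f (x 1) + h (x 1)) - Ψstar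
          + ∑ k ∈ Finset.Icc 1 N,
              (γ k * ⟪δ k, (1 / γ k) • (x k - xe k)⟫ + (γ k / α) * ‖δ k‖ ^ 2) := by
        linarith
end

section
/- Consider the RSPG algorithm as in Theorem 4.1(a) with constant stepsizes γ_k = α/(2L) for all k = 1, …, N, constant batch sizes m_k = m ≥ 1 (so E[δ_k | ξ_{[k−1]}] = 0 and E[‖δ_k‖²] ≤ σ²/m), each step satisfying its first-order optimality condition, and R uniform on {1, …, N} independent of the process. Then E[‖g_{X,R}‖²] ≤ 8L²D_Ψ²/(α²N) + 6σ²/(α²m) and E[‖g̃_{X,R}‖²] ≤ 4L²D_Ψ²/(α²N) + 2σ²/(α²m), where g̃_{X,k} = (x_k − x_{k+1})/γ_k, g_{X,k} = P_X(x_k, ∇f(x_k), γ_k) (the exact-gradient generalized projected gradient, assumed to satisfy its first-order optimality condition), and D_Ψ = ((Ψ(x₁) − Ψ*)/L)^{1/2}. -/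
/-!
An RSPG step is a prox step taken with the perturbed gradient `∇f(x_k) + δ_k`. Testing its
optimality condition at `u = x_k` and combining the strong monotonicity of `∇ω`, the descent lemma
for `f` and Young's inequality on `⟪δ_k, x_k - x_{k+1}⟫` gives, for `γ = α/(2L)`, the sufficient
decrease `L‖x_k - x_{k+1}‖² ≤ Ψ(x_k) - Ψ(x_{k+1}) + ‖δ_k‖²/(2L)`. It telescopes pathwise to a bound
on `∑ ‖x_k - x_{k+1}‖²` by `Ψ(x₁) - Ψ*` and `∑ ‖δ_k‖²`. Testing the optimality conditions of the
exact and the perturbed step against each other shows that the prox map is `γ/α`-Lipschitz in the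
gradient, so `‖x_{k+1} - xe_k‖ ≤ ‖δ_k‖/(2L)`, which transfers the bound to `g_X`. Integrating and
averaging over the uniform index `R` finishes the proof.
-/

open MeasureTheory RealInnerProductSpace Finset

open Set in
theorem Convex.le_add_inner_add_half_mul_sq_of_lipschitz_gradient
    {E : Type*} [NormedAddCommGroup E] [InnerProductSpace ℝ E] [CompleteSpace E]
    {X : Set E} (hX : Convex ℝ X) {f : E → ℝ} {f' : E → E}
    (hf : ∀ z ∈ X, HasGradientAt f (f' z) z) {L : ℝ}
    (hLip : ∀ a ∈ X, ∀ b ∈ X, ‖f' b - f' a‖ ≤ L * ‖b - a‖) {x y : E} (hx : x ∈ X)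
    (hy : y ∈ X) :
    f y ≤ f x + ⟪f' x, y - x⟫ + L / 2 * ‖y - x‖ ^ 2 := by
  set v := y - x
  have hseg : ∀ t ∈ Icc (0 : ℝ) 1, x + t • v ∈ X := fun t ht ↦ hX.add_smul_sub_mem hx hy ht
  let φ : ℝ → ℝ := fun t ↦ f (x + t • v) - t * ⟪f' x, v⟫ - L / 2 * t ^ 2 * ‖v‖ ^ 2
  have hφ : ∀ t ∈ Icc (0 : ℝ) 1,
      HasDerivAt φ (⟪f' (x + t • v), v⟫ - ⟪f' x, v⟫ - L * t * ‖v‖ ^ 2) t := by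
    intro t ht
    have hline : HasDerivAt (fun s : ℝ ↦ x + s • v) v t := by
      simpa using ((hasDerivAt_id t).smul_const v).const_add x
    have hf_line : HasDerivAt (fun s : ℝ ↦ f (x + s • v)) ⟪f' (x + t • v), v⟫ t := by
      simpa [Function.comp_def] using
        (hf _ (hseg t ht)).hasFDerivAt.comp_hasDerivAt t hline
    have hquad : HasDerivAt (fun s : ℝ ↦ L / 2 * s ^ 2 * ‖v‖ ^ 2) (L * t * ‖v‖ ^ 2) t := by
      refine (((hasDerivAt_pow 2 t).const_mul (L / 2)).mul_const (‖v‖ ^ 2)).congr_deriv ?_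
      ring
    exact (hf_line.sub (hasDerivAt_mul_const ⟪f' x, v⟫)).sub hquad
  have hslope : ∀ t ∈ interior (Icc (0 : ℝ) 1), deriv φ t ≤ 0 := by
    intro t ht
    rw [interior_Icc] at ht
    rw [(hφ t (Ioo_subset_Icc_self ht)).deriv, ← inner_sub_left, sub_nonpos]
    calc ⟪f' (x + t • v) - f' x, v⟫ ≤ ‖f' (x + t • v) - f' x‖ * ‖v‖ := real_inner_le_norm _ _
      _ ≤ L * ‖t • v‖ * ‖v‖ := by
        gcongr
        simpa using hLip x hx _ (hseg t (Ioo_subset_Icc_self ht))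
      _ = L * t * ‖v‖ ^ 2 := by rw [norm_smul, Real.norm_of_nonneg ht.1.le]; ring
  have hanti := antitoneOn_of_deriv_nonpos (convex_Icc 0 1)
    (fun t ht ↦ (hφ t ht).continuousAt.continuousWithinAt)
    (fun t ht ↦ (hφ t (interior_subset ht)).differentiableAt.differentiableWithinAt) hslope
    (left_mem_Icc.2 zero_le_one) (right_mem_Icc.2 zero_le_one) zero_le_one
  simp only [φ, v, zero_smul, add_zero, one_smul, add_sub_cancel] at hanti
  linarith

theorem real_inner_le_half_mul_sq_add_sq_div {E : Type*} [NormedAddCommGroup E]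
    [InnerProductSpace ℝ E] {L : ℝ} (hL : 0 < L) (d v : E) :
    ⟪d, v⟫ ≤ L / 2 * ‖v‖ ^ 2 + ‖d‖ ^ 2 / (2 * L) := by
  have hamgm : 2 * L * (‖d‖ * ‖v‖) ≤ (L * ‖v‖) ^ 2 + ‖d‖ ^ 2 := by
    nlinarith [two_mul_le_add_sq (L * ‖v‖) ‖d‖]
  calc ⟪d, v⟫ ≤ ‖d‖ * ‖v‖ := real_inner_le_norm d v
    _ ≤ ((L * ‖v‖) ^ 2 + ‖d‖ ^ 2) / (2 * L) := by rw [le_div_iff₀ (by positivity)]; linarith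
    _ = L / 2 * ‖v‖ ^ 2 + ‖d‖ ^ 2 / (2 * L) := by field_simp

theorem sum_Icc_le_sub_add_sum_of_le_sub_succ {a b u : ℕ → ℝ} {N : ℕ}
    (h : ∀ k ∈ Icc 1 N, a k ≤ u k - u (k + 1) + b k) :
    ∑ k ∈ Icc 1 N, a k ≤ u 1 - u (N + 1) + ∑ k ∈ Icc 1 N, b k := by
  induction N with
  | zero => simp
  | succ n ih =>
    rw [sum_Icc_succ_top (by omega), sum_Icc_succ_top (by omega)]
    have hlast := h (n + 1) (mem_Icc.2 ⟨by omega, le_rfl⟩)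
    have hprev := ih fun k hk ↦ h k (Icc_subset_Icc_right (by omega) hk)
    linarith

section Prox

variable {E : Type*} [NormedAddCommGroup E] [InnerProductSpace ℝ E]

/-- The first-order optimality condition of `y = argmin_{u ∈ X} ⟪g, u⟫ + c * V(u, x) + h u`,
where `V` is the prox-function of `ω` with `gw = ∇ω`, `c = 1/γ`, and `p ∈ ∂h(y)`. -/
def IsProxStationary (X : Set E) (h : E → ℝ) (gw : E → E) (c : ℝ) (x g y : E) : Prop :=
  ∃ p : E, (∀ u ∈ X, h y + ⟪p, u - y⟫ ≤ h u) ∧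
    ∀ u ∈ X, 0 ≤ ⟪g + c • (gw y - gw x) + p, u - y⟫

variable {X : Set E} {h : E → ℝ} {gw : E → E} {α c : ℝ} {x g y u : E}

theorem IsProxStationary.inner_add_le (hs : IsProxStationary X h gw c x g y) (hu : u ∈ X) :
    ⟪g, y - u⟫ + c * ⟪gw y - gw x, y - u⟫ + h y ≤ h u := by
  obtain ⟨p, hsub, hvi⟩ := hs
  have h1 := hsub u hu
  have h2 := hvi u hu
  rw [← neg_sub y u] at h1 h2
  simp only [inner_neg_right, inner_add_left, real_inner_smul_left] at h1 h2
  linarith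

theorem IsProxStationary.inner_add_mul_sq_le
    (hsc : ∀ x ∈ X, ∀ z ∈ X, α * ‖x - z‖ ^ 2 ≤ ⟪x - z, gw x - gw z⟫) (hc : 0 ≤ c)
    (hs : IsProxStationary X h gw c x g y) (hx : x ∈ X) (hy : y ∈ X) :
    ⟪g, y - x⟫ + c * α * ‖y - x‖ ^ 2 + h y ≤ h x := by
  have h1 := hs.inner_add_le hx
  have h2 := mul_le_mul_of_nonneg_left (hsc y hy x hx) hc
  rw [real_inner_comm] at h2
  linarith

theorem IsProxStationary.mul_norm_sub_le
    (hsc : ∀ x ∈ X, ∀ z ∈ X, α * ‖x - z‖ ^ 2 ≤ ⟪x - z, gw x - gw z⟫) (hc : 0 ≤ c)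
    {g₁ g₂ y₁ y₂ : E} (hs₁ : IsProxStationary X h gw c x g₁ y₁)
    (hs₂ : IsProxStationary X h gw c x g₂ y₂) (hy₁ : y₁ ∈ X) (hy₂ : y₂ ∈ X) :
    c * α * ‖y₁ - y₂‖ ≤ ‖g₁ - g₂‖ := by
  have h1 := hs₁.inner_add_le hy₂
  have h2 := hs₂.inner_add_le hy₁
  have hmono := mul_le_mul_of_nonneg_left (hsc y₁ hy₁ y₂ hy₂) hc
  have hcs := real_inner_le_norm (g₂ - g₁) (y₁ - y₂)
  rw [real_inner_comm] at hmono
  rw [norm_sub_rev g₂] at hcs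
  simp only [inner_sub_left, inner_sub_right] at h1 h2 hmono hcs
  have key : c * α * ‖y₁ - y₂‖ * ‖y₁ - y₂‖ ≤ ‖g₁ - g₂‖ * ‖y₁ - y₂‖ := by
    rw [mul_assoc, ← sq]
    linarith
  rcases (norm_nonneg (y₁ - y₂)).eq_or_lt with h0 | hpos
  · simp [← h0]
  · exact le_of_mul_le_mul_right key hpos

theorem IsProxStationary.sufficient_decrease [CompleteSpace E] (hX : Convex ℝ X)
    {f : E → ℝ} {f' : E → E} (hf : ∀ z ∈ X, HasGradientAt f (f' z) z) {L : ℝ} (hL : 0 < L)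
    (hLip : ∀ a ∈ X, ∀ b ∈ X, ‖f' b - f' a‖ ≤ L * ‖b - a‖)
    (hsc : ∀ x ∈ X, ∀ z ∈ X, α * ‖x - z‖ ^ 2 ≤ ⟪x - z, gw x - gw z⟫) (hc : 0 ≤ c)
    (hcα : c * α = 2 * L) {d : E} (hs : IsProxStationary X h gw c x (f' x + d) y)
    (hx : x ∈ X) (hy : y ∈ X) :
    L * ‖x - y‖ ^ 2 ≤ f x + h x - (f y + h y) + ‖d‖ ^ 2 / (2 * L) := by
  have hstep := hs.inner_add_mul_sq_le hsc hc hx hy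
  have hsmooth := hX.le_add_inner_add_half_mul_sq_of_lipschitz_gradient hf hLip hx hy
  have hyoung := real_inner_le_half_mul_sq_add_sq_div hL (-d) (y - x)
  rw [hcα, inner_add_left] at hstep
  rw [inner_neg_left, norm_neg] at hyoung
  rw [norm_sub_rev]
  linarith

theorem IsProxStationary.sq_norm_sub_le_of_perturbed
    (hsc : ∀ x ∈ X, ∀ z ∈ X, α * ‖x - z‖ ^ 2 ≤ ⟪x - z, gw x - gw z⟫) (hc : 0 ≤ c)
    {L : ℝ} (hL : 0 < L) (hcα : c * α = 2 * L) {d ye : E}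
    (hs : IsProxStationary X h gw c x (g + d) y) (hse : IsProxStationary X h gw c x g ye)
    (hy : y ∈ X) (hye : ye ∈ X) :
    ‖x - ye‖ ^ 2 ≤ 2 * ‖x - y‖ ^ 2 + 1 / (2 * L ^ 2) * ‖d‖ ^ 2 := by
  have hstable : 2 * L * ‖y - ye‖ ≤ ‖d‖ := by
    simpa [hcα] using hs.mul_norm_sub_le hsc hc hse hy hye
  have hpar := parallelogram_law_with_norm ℝ (x - y) (y - ye)
  have hsq : 2 * ‖y - ye‖ ^ 2 ≤ 1 / (2 * L ^ 2) * ‖d‖ ^ 2 := by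
    have := mul_self_le_mul_self (by positivity) hstable
    rw [div_mul_eq_mul_div, one_mul, le_div_iff₀ (by positivity)]
    nlinarith
  rw [sub_add_sub_cancel] at hpar
  nlinarith [sq_nonneg ‖x - y - (y - ye)‖]

end Prox

section Pathwise

variable {E : Type*} [NormedAddCommGroup E] [InnerProductSpace ℝ E] [CompleteSpace E]
  {X : Set E} {h : E → ℝ} {gw : E → E} {α c : ℝ} {f : E → ℝ} {f' : E → E} {L Ψstar : ℝ}
  {N : ℕ} {x xe δ : ℕ → E}

theorem rspg_pathwise_bounds (hX : Convex ℝ X) (hf : ∀ z ∈ X, HasGradientAt f (f' z) z)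
    (hL : 0 < L) (hLip : ∀ a ∈ X, ∀ b ∈ X, ‖f' b - f' a‖ ≤ L * ‖b - a‖)
    (hsc : ∀ x ∈ X, ∀ z ∈ X, α * ‖x - z‖ ^ 2 ≤ ⟪x - z, gw x - gw z⟫) (hc : 0 ≤ c)
    (hcα : c * α = 2 * L) (hΨstar : ∀ z ∈ X, Ψstar ≤ f z + h z) (hx₁ : x 1 ∈ X)
    (hxX : ∀ k ∈ Icc 1 N, x (k + 1) ∈ X) (hxeX : ∀ k ∈ Icc 1 N, xe k ∈ X)
    (hopt : ∀ k ∈ Icc 1 N, IsProxStationary X h gw c (x k) (f' (x k) + δ k) (x (k + 1)))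
    (hopte : ∀ k ∈ Icc 1 N, IsProxStationary X h gw c (x k) (f' (x k)) (xe k)) :
    ∑ k ∈ Icc 1 N, ‖x k - x (k + 1)‖ ^ 2 ≤
        (f (x 1) + h (x 1) - Ψstar) / L + 1 / (2 * L ^ 2) * ∑ k ∈ Icc 1 N, ‖δ k‖ ^ 2 ∧
      ∑ k ∈ Icc 1 N, ‖x k - xe k‖ ^ 2 ≤
        2 * ((f (x 1) + h (x 1) - Ψstar) / L) +
          3 / (2 * L ^ 2) * ∑ k ∈ Icc 1 N, ‖δ k‖ ^ 2 := by
  have hxk : ∀ k ∈ Icc 1 (N + 1), x k ∈ X := by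
    intro k hk
    obtain ⟨hk1, hkN⟩ := mem_Icc.1 hk
    obtain ⟨j, rfl⟩ := Nat.exists_eq_add_of_le' hk1
    rcases j with _ | j
    · exact hx₁
    · exact hxX (j + 1) (mem_Icc.2 ⟨by omega, by omega⟩)
  have hdecr : ∀ k ∈ Icc 1 N, ‖x k - x (k + 1)‖ ^ 2 ≤
      (f (x k) + h (x k)) / L - (f (x (k + 1)) + h (x (k + 1))) / L
        + 1 / (2 * L ^ 2) * ‖δ k‖ ^ 2 := by
    intro k hk
    have hk' := (hopt k hk).sufficient_decrease hX hf hL hLip hsc hc hcα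
      (hxk k (Icc_subset_Icc_right (by omega) hk)) (hxX k hk)
    calc ‖x k - x (k + 1)‖ ^ 2 = L * ‖x k - x (k + 1)‖ ^ 2 / L := by field_simp
      _ ≤ (f (x k) + h (x k) - (f (x (k + 1)) + h (x (k + 1))) + ‖δ k‖ ^ 2 / (2 * L)) / L := by
        gcongr
      _ = _ := by field_simp
  have hlast : Ψstar / L ≤ (f (x (N + 1)) + h (x (N + 1))) / L :=
    div_le_div_of_nonneg_right (hΨstar _ (hxk (N + 1) (mem_Icc.2 ⟨by omega, le_rfl⟩)))
      hL.le
  have hsum₁ := sum_Icc_le_sub_add_sum_of_le_sub_succ hdecr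
  rw [← mul_sum] at hsum₁
  have hexact : ∀ k ∈ Icc 1 N, ‖x k - xe k‖ ^ 2 ≤
      2 * ‖x k - x (k + 1)‖ ^ 2 + 1 / (2 * L ^ 2) * ‖δ k‖ ^ 2 := fun k hk ↦
    (hopt k hk).sq_norm_sub_le_of_perturbed hsc hc hL hcα (hopte k hk) (hxX k hk) (hxeX k hk)
  have hsum₂ := sum_le_sum hexact
  rw [sum_add_distrib, ← mul_sum, ← mul_sum] at hsum₂
  rw [sub_div, show 3 / (2 * L ^ 2) = 3 * (1 / (2 * L ^ 2)) by ring]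
  constructor <;> linarith

end Pathwise

section Expectation

variable {Ω : Type*} {mΩ : MeasurableSpace Ω} {μ : Measure Ω} {ι : Type*}

theorem sum_integral_le_integral_of_sum_le (s : Finset ι) {f : ι → Ω → ℝ} {g : Ω → ℝ}
    (hf : ∀ i ∈ s, ∀ ω, 0 ≤ f i ω) (hg : Integrable g μ) (hfg : ∀ ω, ∑ i ∈ s, f i ω ≤ g ω) :
    ∑ i ∈ s, ∫ ω, f i ω ∂μ ≤ ∫ ω, g ω ∂μ := by
  classical
  -- a non-integrable `f i` has integral `0`, so it may be replaced by `0`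
  let F : ι → Ω → ℝ := fun i ↦ if Integrable (f i) μ then f i else 0
  have hFint : ∀ i, Integrable (F i) μ := fun i ↦ by
    by_cases hi : Integrable (f i) μ <;> simp [F, hi]
  have hFeq : ∀ i, ∫ ω, F i ω ∂μ = ∫ ω, f i ω ∂μ := fun i ↦ by
    by_cases hi : Integrable (f i) μ <;> simp [F, hi, integral_undef]
  have hFle : ∀ i ∈ s, ∀ ω, 0 ≤ F i ω ∧ F i ω ≤ f i ω := fun i hi ω ↦ by
    by_cases hint : Integrable (f i) μ <;> simp [F, hint, hf i hi ω]
  calc ∑ i ∈ s, ∫ ω, f i ω ∂μ = ∫ ω, ∑ i ∈ s, F i ω ∂μ := by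
        simp only [← hFeq, integral_finsetSum s fun i _ ↦ hFint i]
    _ ≤ ∫ ω, g ω ∂μ :=
        integral_mono_of_nonneg (ae_of_all _ fun ω ↦ sum_nonneg fun i hi ↦ (hFle i hi ω).1)
          hg (ae_of_all _ fun ω ↦
            (sum_le_sum fun i hi ↦ (hFle i hi ω).2).trans (hfg ω))

variable {E : Type*} [NormedAddCommGroup E]

theorem sum_integral_le_of_sum_le_add_mul_sum_sq_norm [IsProbabilityMeasure μ] (s : Finset ι)
    {φ : ι → Ω → ℝ} {δ : ι → Ω → E} {a b v : ℝ} (hφ : ∀ i ∈ s, ∀ ω, 0 ≤ φ i ω) (hb : 0 ≤ b)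
    (hδ : ∀ i ∈ s, MemLp (δ i) 2 μ) (hv : ∀ i ∈ s, ∫ ω, ‖δ i ω‖ ^ 2 ∂μ ≤ v)
    (hφδ : ∀ ω, ∑ i ∈ s, φ i ω ≤ a + b * ∑ i ∈ s, ‖δ i ω‖ ^ 2) :
    ∑ i ∈ s, ∫ ω, φ i ω ∂μ ≤ a + b * (s.card * v) := by
  have hδint : ∀ i ∈ s, Integrable (fun ω ↦ ‖δ i ω‖ ^ 2) μ := fun i hi ↦
    (memLp_two_iff_integrable_sq_norm (hδ i hi).aestronglyMeasurable).1 (hδ i hi)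
  have hsumint := (integrable_finsetSum s hδint).const_mul b
  calc ∑ i ∈ s, ∫ ω, φ i ω ∂μ ≤ ∫ ω, a + b * ∑ i ∈ s, ‖δ i ω‖ ^ 2 ∂μ :=
        sum_integral_le_integral_of_sum_le s hφ ((integrable_const a).add hsumint) hφδ
    _ = a + b * ∑ i ∈ s, ∫ ω, ‖δ i ω‖ ^ 2 ∂μ := by
        rw [integral_add (integrable_const a) hsumint, integral_const_mul,
          integral_finsetSum s hδint]
        simp
    _ ≤ a + b * (s.card * v) := by
        gcongr
        simpa using sum_le_card_nsmul s _ v hv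

variable [NormedSpace ℝ E]

theorem sum_one_div_card_mul_integral_norm_smul_sq_le (s : Finset ι) {u : ι → Ω → E}
    {a b c v : ℝ} (hbv : 0 ≤ b * v)
    (hu : ∑ i ∈ s, ∫ ω, ‖u i ω‖ ^ 2 ∂μ ≤ a + b * (s.card * v)) :
    ∑ i ∈ s, 1 / (s.card : ℝ) * ∫ ω, ‖c • u i ω‖ ^ 2 ∂μ ≤
      c ^ 2 * a / s.card + c ^ 2 * b * v := by
  simp only [norm_smul, mul_pow, Real.norm_eq_abs, sq_abs, integral_const_mul, ← mul_sum]
  calc 1 / (s.card : ℝ) * (c ^ 2 * ∑ i ∈ s, ∫ ω, ‖u i ω‖ ^ 2 ∂μ)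
      ≤ 1 / s.card * (c ^ 2 * (a + b * (s.card * v))) := by gcongr
    _ = c ^ 2 * a / s.card + c ^ 2 * (b * v) * (s.card / s.card) := by ring
    _ ≤ c ^ 2 * a / s.card + c ^ 2 * b * v := by
        have := mul_le_of_le_one_right (mul_nonneg (sq_nonneg c) hbv)
          (div_self_le_one (s.card : ℝ))
        linarith

end Expectation

/-- `E[‖g_{X,R}‖²]` and `E[‖g̃_{X,R}‖²]` over the uniform index `R` are written out as averages
over `k ∈ [1, N]`. -/
theorem rspg_constant_stepsize_bound_general
    {E : Type*} [NormedAddCommGroup E] [InnerProductSpace ℝ E] [FiniteDimensional ℝ E]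
    {Ω : Type*} {mΩ : MeasurableSpace Ω} (μ : Measure Ω) [IsProbabilityMeasure μ]
    (X : Set E) (hXcv : Convex ℝ X)
    (h : E → ℝ)
    (gw : E → E)
    (α : ℝ) (hα : 0 < α)
    (hsc : ∀ x ∈ X, ∀ z ∈ X, α * ‖x - z‖ ^ 2 ≤ ⟪x - z, gw x - gw z⟫)
    (f : E → ℝ) (f' : E → E) (hf' : ∀ x ∈ X, HasGradientAt f (f' x) x)
    (L : ℝ) (hL : 0 < L)
    (hLip : ∀ x ∈ X, ∀ y ∈ X, ‖f' y - f' x‖ ≤ L * ‖y - x‖)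
    -- Ψ* = inf_{x ∈ X} (f + h)(x) is finite
    (Ψstar : ℝ) (hΨstar : IsGLB ((fun z => f z + h z) '' X) Ψstar)
    (N : ℕ)
    (m : ℕ) (σ : ℝ)
    -- random iterates and stochastic errors
    (x : ℕ → Ω → E) (x₁ : E) (hx₁ : ∀ ωp, x 1 ωp = x₁) (hx₁X : x₁ ∈ X)
    (δ : ℕ → Ω → E)
    (hδL2 : ∀ k ∈ Finset.Icc 1 N, MemLp (δ k) 2 μ)
    -- E[δ_k | ξ_{[k-1]}] = 0 and E[‖δ_k‖²] ≤ σ²/m_k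
    (hδvar : ∀ k ∈ Finset.Icc 1 N, ∫ ωp, ‖δ k ωp‖ ^ 2 ∂μ ≤ σ ^ 2 / m)
    (hxX : ∀ k ∈ Finset.Icc 1 N, ∀ ωp, x (k + 1) ωp ∈ X)
    (hopt : ∀ k ∈ Finset.Icc 1 N, ∀ ωp, ∃ p : E,
      (∀ u ∈ X, h (x (k + 1) ωp) + ⟪p, u - x (k + 1) ωp⟫ ≤ h u) ∧
      (∀ u ∈ X, 0 ≤ ⟪(f' (x k ωp) + δ k ωp)
          + (1 / (α / (2 * L))) • (gw (x (k + 1) ωp) - gw (x k ωp)) + p, u - x (k + 1) ωp⟫))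
    -- xe_k is the generalized projection at x_k with the exact gradient ∇f(x_k),
    -- so that g_{X,k} = P_X(x_k, ∇f(x_k), γ_k) = (x_k - xe_k)/γ_k
    (xe : ℕ → Ω → E)
    (hxeX : ∀ k ∈ Finset.Icc 1 N, ∀ ωp, xe k ωp ∈ X)
    (hopte : ∀ k ∈ Finset.Icc 1 N, ∀ ωp, ∃ p : E,
      (∀ u ∈ X, h (xe k ωp) + ⟪p, u - xe k ωp⟫ ≤ h u) ∧
      (∀ u ∈ X, 0 ≤ ⟪f' (x k ωp)
          + (1 / (α / (2 * L))) • (gw (xe k ωp) - gw (x k ωp)) + p, u - xe k ωp⟫)) :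
    (∑ k ∈ Finset.Icc 1 N, (1 / (N : ℝ)) *
        ∫ ωp, ‖(1 / (α / (2 * L))) • (x k ωp - xe k ωp)‖ ^ 2 ∂μ ≤
      8 * L ^ 2 * ((f x₁ + h x₁ - Ψstar) / L) / (α ^ 2 * N) + 6 * σ ^ 2 / (α ^ 2 * m)) ∧
    ∑ k ∈ Finset.Icc 1 N, (1 / (N : ℝ)) *
        ∫ ωp, ‖(1 / (α / (2 * L))) • (x k ωp - x (k + 1) ωp)‖ ^ 2 ∂μ ≤
      4 * L ^ 2 * ((f x₁ + h x₁ - Ψstar) / L) / (α ^ 2 * N) + 2 * σ ^ 2 / (α ^ 2 * m) := by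
  simp only [one_div_div] at hopt hopte ⊢
  have hc : 0 ≤ 2 * L / α := by positivity
  have hcα : 2 * L / α * α = 2 * L := by field_simp
  have hpath := fun ωp ↦ hx₁ ωp ▸ rspg_pathwise_bounds (x := fun k ↦ x k ωp)
    (xe := fun k ↦ xe k ωp) (δ := fun k ↦ δ k ωp) hXcv hf' hL hLip hsc hc hcα
    (fun z hz ↦ hΨstar.1 ⟨z, hz, rfl⟩) (hx₁ ωp ▸ hx₁X) (fun k hk ↦ hxX k hk ωp)
    (fun k hk ↦ hxeX k hk ωp) (fun k hk ↦ hopt k hk ωp) (fun k hk ↦ hopte k hk ωp)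
  have hcard : ((Finset.Icc 1 N).card : ℝ) = N := by simp
  have hexact := sum_one_div_card_mul_integral_norm_smul_sq_le (c := 2 * L / α) _
    (by positivity) <| sum_integral_le_of_sum_le_add_mul_sum_sq_norm _
      (fun k _ ωp ↦ sq_nonneg ‖x k ωp - xe k ωp‖) (by positivity) hδL2 hδvar
      fun ωp ↦ (hpath ωp).2
  have hinexact := sum_one_div_card_mul_integral_norm_smul_sq_le (c := 2 * L / α) _
    (by positivity) <| sum_integral_le_of_sum_le_add_mul_sum_sq_norm _
      (fun k _ ωp ↦ sq_nonneg ‖x k ωp - x (k + 1) ωp‖) (by positivity) hδL2 hδvar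
      fun ωp ↦ (hpath ωp).1
  rw [hcard] at hexact hinexact
  refine ⟨hexact.trans_eq ?_, hinexact.trans_eq ?_⟩ <;> field_simp <;> ring

/-- Corollary 4.3 (constant stepsizes `γ_k = α/(2L)`, constant batch size `m`, uniform `R`):
`E[‖g_{X,R}‖²] ≤ 8L²D_Ψ²/(α²N) + 6σ²/(α²m)` and
`E[‖g̃_{X,R}‖²] ≤ 4L²D_Ψ²/(α²N) + 2σ²/(α²m)`. The expectation over the independent
uniform random index `R` is written out as a weighted sum. -/
theorem rspg_constant_stepsize_bound
    {E : Type*} [NormedAddCommGroup E] [InnerProductSpace ℝ E] [FiniteDimensional ℝ E]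
    [MeasurableSpace E] [BorelSpace E]
    {Ω : Type*} {mΩ : MeasurableSpace Ω} (μ : Measure Ω) [IsProbabilityMeasure μ]
    (ℱ : Filtration ℕ mΩ)
    (X : Set E) (hXne : X.Nonempty) (hXcl : IsClosed X) (hXcv : Convex ℝ X)
    (h : E → ℝ) (hh : ConvexOn ℝ X h)
    (w : E → ℝ) (gw : E → E) (hgw : ∀ x ∈ X, HasGradientAt w (gw x) x)
    (α : ℝ) (hα : 0 < α)
    (hsc : ∀ x ∈ X, ∀ z ∈ X, α * ‖x - z‖ ^ 2 ≤ ⟪x - z, gw x - gw z⟫)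
    (f : E → ℝ) (f' : E → E) (hf' : ∀ x ∈ X, HasGradientAt f (f' x) x)
    (L : ℝ) (hL : 0 < L)
    (hLip : ∀ x ∈ X, ∀ y ∈ X, ‖f' y - f' x‖ ≤ L * ‖y - x‖)
    -- Ψ* = inf_{x ∈ X} (f + h)(x) is finite
    (Ψstar : ℝ) (hΨstar : IsGLB ((fun z => f z + h z) '' X) Ψstar)
    (N : ℕ) (hN : 1 ≤ N)
    (m : ℕ) (hm : 1 ≤ m) (σ : ℝ)
    -- random iterates and stochastic errors
    (x : ℕ → Ω → E) (x₁ : E) (hx₁ : ∀ ωp, x 1 ωp = x₁) (hx₁X : x₁ ∈ X)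
    (δ : ℕ → Ω → E)
    (hxmeas : ∀ k ∈ Finset.Icc 1 N, StronglyMeasurable[ℱ (k - 1)] (x k))
    (hxmeas' : ∀ k ∈ Finset.Icc 1 N, StronglyMeasurable[ℱ k] (x (k + 1)))
    (hδL2 : ∀ k ∈ Finset.Icc 1 N, MemLp (δ k) 2 μ)
    -- E[δ_k | ξ_{[k-1]}] = 0 and E[‖δ_k‖²] ≤ σ²/m_k
    (hδcond : ∀ k ∈ Finset.Icc 1 N, μ[δ k | ℱ (k - 1)] =ᵐ[μ] 0)
    (hδvar : ∀ k ∈ Finset.Icc 1 N, ∫ ωp, ‖δ k ωp‖ ^ 2 ∂μ ≤ σ ^ 2 / m)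
    (hxX : ∀ k ∈ Finset.Icc 1 N, ∀ ωp, x (k + 1) ωp ∈ X)
    -- x_{k+1} = argmin_{u ∈ X} ⟨G_k, u⟩ + (1/γ_k)V(u, x_k) + h(u), G_k = ∇f(x_k) + δ_k
    (hmin : ∀ k ∈ Finset.Icc 1 N, ∀ ωp, ∀ u ∈ X,
      ⟪f' (x k ωp) + δ k ωp, x (k + 1) ωp⟫
          + (1 / (α / (2 * L))) * (w (x (k + 1) ωp) - w (x k ωp) - ⟪gw (x k ωp), x (k + 1) ωp - x k ωp⟫)
          + h (x (k + 1) ωp) ≤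
        ⟪f' (x k ωp) + δ k ωp, u⟫
          + (1 / (α / (2 * L))) * (w u - w (x k ωp) - ⟪gw (x k ωp), u - x k ωp⟫) + h u)
    (hopt : ∀ k ∈ Finset.Icc 1 N, ∀ ωp, ∃ p : E,
      (∀ u ∈ X, h (x (k + 1) ωp) + ⟪p, u - x (k + 1) ωp⟫ ≤ h u) ∧
      (∀ u ∈ X, 0 ≤ ⟪(f' (x k ωp) + δ k ωp)
          + (1 / (α / (2 * L))) • (gw (x (k + 1) ωp) - gw (x k ωp)) + p, u - x (k + 1) ωp⟫))
    -- xe_k is the generalized projection at x_k with the exact gradient ∇f(x_k),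
    -- so that g_{X,k} = P_X(x_k, ∇f(x_k), γ_k) = (x_k - xe_k)/γ_k
    (xe : ℕ → Ω → E)
    (hxeX : ∀ k ∈ Finset.Icc 1 N, ∀ ωp, xe k ωp ∈ X)
    (hmine : ∀ k ∈ Finset.Icc 1 N, ∀ ωp, ∀ u ∈ X,
      ⟪f' (x k ωp), xe k ωp⟫
          + (1 / (α / (2 * L))) * (w (xe k ωp) - w (x k ωp) - ⟪gw (x k ωp), xe k ωp - x k ωp⟫)
          + h (xe k ωp) ≤
        ⟪f' (x k ωp), u⟫
          + (1 / (α / (2 * L))) * (w u - w (x k ωp) - ⟪gw (x k ωp), u - x k ωp⟫) + h u)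
    (hopte : ∀ k ∈ Finset.Icc 1 N, ∀ ωp, ∃ p : E,
      (∀ u ∈ X, h (xe k ωp) + ⟪p, u - xe k ωp⟫ ≤ h u) ∧
      (∀ u ∈ X, 0 ≤ ⟪f' (x k ωp)
          + (1 / (α / (2 * L))) • (gw (xe k ωp) - gw (x k ωp)) + p, u - xe k ωp⟫)) :
    (∑ k ∈ Finset.Icc 1 N, (1 / (N : ℝ)) *
        ∫ ωp, ‖(1 / (α / (2 * L))) • (x k ωp - xe k ωp)‖ ^ 2 ∂μ ≤
      8 * L ^ 2 * ((f x₁ + h x₁ - Ψstar) / L) / (α ^ 2 * N) + 6 * σ ^ 2 / (α ^ 2 * m)) ∧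
    ∑ k ∈ Finset.Icc 1 N, (1 / (N : ℝ)) *
        ∫ ωp, ‖(1 / (α / (2 * L))) • (x k ωp - x (k + 1) ωp)‖ ^ 2 ∂μ ≤
      4 * L ^ 2 * ((f x₁ + h x₁ - Ψstar) / L) / (α ^ 2 * N) + 2 * σ ^ 2 / (α ^ 2 * m) :=
  rspg_constant_stepsize_bound_general (mΩ := mΩ) μ X hXcv h gw α hα hsc f f' hf' L hL hLip Ψstar
    hΨstar N m σ x x₁ hx₁ hx₁X δ hδL2 hδvar hxX hopt xe hxeX hopte
end

section
/- Let g₁, …, g_S and ḡ₁, …, ḡ_S be vectors in a real inner product space, and let s* ∈ {1, …, S} attain the minimum of ‖ḡ_s‖ over s = 1, …, S. Then ‖g_{s*}‖² ≤ 4·min_{1≤s≤S} ‖g_s‖² + 6·max_{1≤s≤S} ‖ḡ_s − g_s‖². -/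
/-- The elementary selection inequality (4.38) used in the post-optimization phase:
if `s*` minimizes `‖ḡ_s‖` over `s = 1, …, S`, then
`‖g_{s*}‖² ≤ 4 min_s ‖g_s‖² + 6 max_s ‖ḡ_s - g_s‖²`. -/
theorem post_optimization_selection_inequality
    {E : Type*} [NormedAddCommGroup E] [InnerProductSpace ℝ E]
    (S : ℕ) (hS : 1 ≤ S) (g gbar : ℕ → E)
    (sstar : ℕ) (hsstar : sstar ∈ Finset.Icc 1 S)
    (hmin : ∀ s ∈ Finset.Icc 1 S, ‖gbar sstar‖ ≤ ‖gbar s‖) :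
    ‖g sstar‖ ^ 2 ≤
      4 * ((Finset.Icc 1 S).inf' (Finset.nonempty_Icc.mpr hS) fun s => ‖g s‖ ^ 2)
        + 6 * ((Finset.Icc 1 S).sup' (Finset.nonempty_Icc.mpr hS) fun s => ‖gbar s - g s‖ ^ 2) := by
  obtain ⟨s₀, hs₀, hinf⟩ := Finset.exists_mem_eq_inf' (Finset.nonempty_Icc.mpr hS)
    (fun s => ‖g s‖ ^ 2)
  set D := (Finset.Icc 1 S).sup' (Finset.nonempty_Icc.mpr hS) fun s => ‖gbar s - g s‖ ^ 2
  have hD1 : ‖gbar sstar - g sstar‖ ^ 2 ≤ D := Finset.le_sup' (fun s => ‖gbar s - g s‖ ^ 2) hsstar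
  have hD0 : ‖gbar s₀ - g s₀‖ ^ 2 ≤ D := Finset.le_sup' (fun s => ‖gbar s - g s‖ ^ 2) hs₀
  have h1 : ‖g sstar‖ ≤ ‖gbar sstar‖ + ‖gbar sstar - g sstar‖ := by
    have := norm_sub_le (gbar sstar) (gbar sstar - g sstar)
    simpa using this
  have h2 : ‖gbar sstar‖ ≤ ‖gbar s₀‖ := hmin s₀ hs₀
  have h3 : ‖gbar s₀‖ ≤ ‖g s₀‖ + ‖gbar s₀ - g s₀‖ := by
    have := norm_add_le (g s₀) (gbar s₀ - g s₀)
    simpa using this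
  have ha : (0:ℝ) ≤ ‖g sstar‖ := norm_nonneg _
  have hb : (0:ℝ) ≤ ‖g s₀‖ := norm_nonneg _
  have hc : (0:ℝ) ≤ ‖gbar sstar - g sstar‖ := norm_nonneg _
  have hd : (0:ℝ) ≤ ‖gbar s₀ - g s₀‖ := norm_nonneg _
  rw [hinf]
  nlinarith [sq_nonneg (‖g s₀‖ - ‖gbar s₀ - g s₀‖),
    sq_nonneg (‖g s₀‖ - ‖gbar sstar - g sstar‖),
    sq_nonneg (‖gbar s₀ - g s₀‖ - ‖gbar sstar - g sstar‖),
    sq_nonneg (‖g sstar‖ - ‖g s₀‖ - ‖gbar s₀ - g s₀‖ - ‖gbar sstar - g sstar‖)]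
end

section
/- Let f : ℝⁿ → ℝ be continuously differentiable with L-Lipschitz gradient (with respect to the Euclidean norm), let μ > 0, and define the Gaussian smoothing f_μ(x) = (2π)^{−n/2} ∫_{ℝⁿ} f(x + μv) e^{−‖v‖²/2} dv. Then for every x ∈ ℝⁿ, |f_μ(x) − f(x)| ≤ (μ²/2)·L·n. -/
/-!
A gradient that is `L`-Lipschitz gives the second-order Taylor bound
`|f (x + μ v) - f x - μ ⟪∇f x, v⟫| ≤ (L μ² / 2) ‖v‖²`. Integrating against the Gaussian weight,
the constant term reproduces `f x`, the linear term vanishes by symmetry, and the quadratic bound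
integrates to `(L μ² / 2) n`, because the standard Gaussian has second moment `E ‖v‖² = n`: by
integration by parts each coordinate contributes `E ⟪e, v⟫² = 1`.
-/

open MeasureTheory Real Module
open scoped RealInnerProductSpace

section Descent

variable {E F : Type*} [NormedAddCommGroup E] [NormedSpace ℝ E]
  [NormedAddCommGroup F] [NormedSpace ℝ F]

theorem norm_sub_sub_fderiv_le_of_lipschitz {f : E → F} {f' : E → E →L[ℝ] F}
    (hf : ∀ x, HasFDerivAt f (f' x) x) {L : ℝ} (hL : ∀ x y, ‖f' y - f' x‖ ≤ L * ‖y - x‖)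
    (x y : E) : ‖f y - f x - f' x (y - x)‖ ≤ L / 2 * ‖y - x‖ ^ 2 := by
  set g : ℝ → F := fun t ↦ f (x + t • (y - x)) - f x - t • f' x (y - x)
  have hg : ∀ t, HasDerivAt g (f' (x + t • (y - x)) (y - x) - f' x (y - x)) t := by
    intro t
    have hline : HasDerivAt (fun t : ℝ ↦ x + t • (y - x)) (y - x) t := by
      simpa using ((hasDerivAt_id t).smul_const (y - x)).const_add x
    exact (((hf _).comp_hasDerivAt t hline).sub_const (f x)).sub
      ((hasDerivAt_id t).smul_const (f' x (y - x)) |>.congr_deriv (one_smul ℝ _))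
  have hB : ∀ t, HasDerivAt (fun t : ℝ ↦ L / 2 * ‖y - x‖ ^ 2 * t ^ 2) (L * ‖y - x‖ ^ 2 * t) t :=
    fun t ↦ ((hasDerivAt_pow 2 t).const_mul (L / 2 * ‖y - x‖ ^ 2)).congr_deriv (by ring)
  -- compare `g` on `[0, 1]` with the barrier `L / 2 ‖y - x‖² t²`
  have key := image_norm_le_of_norm_deriv_right_le_deriv_boundary (a := 0) (b := 1)
    (fun t _ ↦ (hg t).continuousAt.continuousWithinAt) (fun t _ ↦ (hg t).hasDerivWithinAt)
    (by simp [g]) hB (fun t ht ↦ ?_) (Set.right_mem_Icc.2 zero_le_one)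
  · simpa [g] using key
  calc ‖f' (x + t • (y - x)) (y - x) - f' x (y - x)‖
      = ‖(f' (x + t • (y - x)) - f' x) (y - x)‖ := rfl
    _ ≤ ‖f' (x + t • (y - x)) - f' x‖ * ‖y - x‖ := ContinuousLinearMap.le_opNorm _ _
    _ ≤ L * ‖t • (y - x)‖ * ‖y - x‖ := by
        gcongr
        simpa using hL x (x + t • (y - x))
    _ = L * ‖y - x‖ ^ 2 * t := by
        rw [norm_smul, Real.norm_of_nonneg ht.1]; ring

end Descent

theorem abs_sub_sub_inner_le_of_lipschitz_gradient {E : Type*} [NormedAddCommGroup E]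
    [InnerProductSpace ℝ E] [CompleteSpace E] {f : E → ℝ} {f' : E → E}
    (hf : ∀ x, HasGradientAt f (f' x) x) {L : ℝ} (hL : ∀ x y, ‖f' y - f' x‖ ≤ L * ‖y - x‖)
    (x y : E) : |f y - f x - ⟪f' x, y - x⟫| ≤ L / 2 * ‖y - x‖ ^ 2 := by
  refine norm_sub_sub_fderiv_le_of_lipschitz (f' := fun x ↦ InnerProductSpace.toDual ℝ E (f' x))
    hf (fun x y ↦ ?_) x y
  rw [← map_sub, LinearIsometryEquiv.norm_map]
  exact hL x y

section Gaussian

variable {V : Type*} [NormedAddCommGroup V] [InnerProductSpace ℝ V]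

theorem hasFDerivAt_exp_neg_sq_norm_div_two (v : V) :
    HasFDerivAt (fun v : V ↦ exp (-‖v‖ ^ 2 / 2)) (-exp (-‖v‖ ^ 2 / 2) • innerSL ℝ v) v :=
  (((hasDerivAt_id _).neg.div_const 2).exp.comp_hasFDerivAt v
    (hasStrictFDerivAt_norm_sq v).hasFDerivAt).congr_fderiv (by ext w; simp; ring)

variable [FiniteDimensional ℝ V] [MeasurableSpace V] [BorelSpace V]

theorem integral_exp_neg_sq_norm_div_two :
    ∫ v : V, exp (-‖v‖ ^ 2 / 2) = (2 * π) ^ (finrank ℝ V / 2 : ℝ) := by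
  convert GaussianFourier.integral_rexp_neg_mul_sq_norm (V := V) (b := 1 / 2) (by norm_num)
    using 3 with v
  · ring_nf
  · ring

theorem integrable_exp_neg_sq_norm_div_two : Integrable fun v : V ↦ exp (-‖v‖ ^ 2 / 2) :=
  .of_integral_ne_zero (by rw [integral_exp_neg_sq_norm_div_two]; positivity)

theorem integrable_sq_norm_mul_exp_neg_sq_norm_div_two :
    Integrable fun v : V ↦ ‖v‖ ^ 2 * exp (-‖v‖ ^ 2 / 2) := by
  have hint : Integrable fun v : V ↦ exp (-(1 / 4) * ‖v‖ ^ 2) :=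
    .of_integral_ne_zero (by
      rw [GaussianFourier.integral_rexp_neg_mul_sq_norm (by norm_num)]; positivity)
  refine (hint.const_mul 4).mono' (by fun_prop) (.of_forall fun v ↦ ?_)
  set t := ‖v‖ ^ 2
  -- `t ≤ 4 exp (t / 4)` trades half of the Gaussian decay for the factor `t`
  have hexp : exp (-t / 2) = exp (-(1 / 4) * t) * exp (-(1 / 4) * t) := by
    rw [← exp_add]; ring_nf
  have ht : t ≤ 4 * exp (t / 4) := by linarith [add_one_le_exp (t / 4)]
  have hinv : exp (t / 4) * exp (-(1 / 4) * t) = 1 := by rw [← exp_add]; ring_nf; exact exp_zero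
  rw [Real.norm_of_nonneg (by positivity), hexp]
  calc t * (exp (-(1 / 4) * t) * exp (-(1 / 4) * t))
      ≤ 4 * exp (t / 4) * (exp (-(1 / 4) * t) * exp (-(1 / 4) * t)) := by gcongr
    _ = 4 * exp (-(1 / 4) * t) * (exp (t / 4) * exp (-(1 / 4) * t)) := by ring
    _ = 4 * exp (-(1 / 4) * t) := by rw [hinv, mul_one]

theorem integrable_mul_exp_neg_sq_norm_div_two_of_abs_le {g : V → ℝ}
    (hg : AEStronglyMeasurable g) {a b : ℝ} (hab : ∀ v, |g v| ≤ a + b * ‖v‖ ^ 2) :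
    Integrable fun v ↦ g v * exp (-‖v‖ ^ 2 / 2) := by
  refine ((integrable_exp_neg_sq_norm_div_two.const_mul a).add
    (integrable_sq_norm_mul_exp_neg_sq_norm_div_two.const_mul b)).mono'
    (hg.mul (by fun_prop)) (.of_forall fun v ↦ ?_)
  rw [norm_mul, Real.norm_eq_abs, Real.norm_of_nonneg (exp_pos _).le, Pi.add_apply, ← mul_assoc,
    ← add_mul]
  exact mul_le_mul_of_nonneg_right (hab v) (exp_pos _).le

theorem integrable_inner_mul_exp_neg_sq_norm_div_two (c : V) :
    Integrable fun v : V ↦ ⟪c, v⟫ * exp (-‖v‖ ^ 2 / 2) :=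
  integrable_mul_exp_neg_sq_norm_div_two_of_abs_le (a := ‖c‖) (b := ‖c‖) (by fun_prop) fun v ↦ by
    nlinarith [abs_real_inner_le_norm c v, norm_nonneg c, sq_nonneg (‖v‖ - 1)]

theorem integral_inner_mul_exp_neg_sq_norm_div_two (c : V) :
    ∫ v : V, ⟪c, v⟫ * exp (-‖v‖ ^ 2 / 2) = 0 := by
  have h := integral_neg_eq_self (fun v : V ↦ ⟪c, v⟫ * exp (-‖v‖ ^ 2 / 2)) volume
  simp only [inner_neg_right, norm_neg, neg_mul, integral_neg] at h
  linarith

theorem integrable_inner_sq_mul_exp_neg_sq_norm_div_two (u : V) :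
    Integrable fun v : V ↦ ⟪u, v⟫ ^ 2 * exp (-‖v‖ ^ 2 / 2) :=
  integrable_mul_exp_neg_sq_norm_div_two_of_abs_le (a := 0) (b := ‖u‖ ^ 2) (by fun_prop)
    fun v ↦ by
      rw [abs_pow, zero_add, ← mul_pow]
      exact pow_le_pow_left₀ (abs_nonneg _) (abs_real_inner_le_norm u v) 2

theorem integral_inner_sq_mul_exp_neg_sq_norm_div_two (u : V) :
    ∫ v : V, ⟪u, v⟫ ^ 2 * exp (-‖v‖ ^ 2 / 2) = ‖u‖ ^ 2 * ∫ v : V, exp (-‖v‖ ^ 2 / 2) := by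
  have hpt (v : V) : ⟪u, v⟫ * (-exp (-‖v‖ ^ 2 / 2) * ⟪u, v⟫) =
      -(⟪u, v⟫ ^ 2 * exp (-‖v‖ ^ 2 / 2)) := by ring
  -- integration by parts in the direction `u`, against `∂ᵤ ⟪u, v⟫ = ‖u‖²`
  have h := integral_bilinear_hasFDerivAt_right_eq_neg_left_of_integrable
    (B := ContinuousLinearMap.mul ℝ ℝ) (v := u) (f := fun v : V ↦ ⟪u, v⟫)
    (f' := fun _ ↦ innerSL ℝ u) (g' := fun v ↦ -exp (-‖v‖ ^ 2 / 2) • innerSL ℝ v)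
    ?_ ?_ (integrable_inner_mul_exp_neg_sq_norm_div_two u)
    (fun v _ ↦ (innerSL ℝ u).hasFDerivAt) (fun v _ ↦ hasFDerivAt_exp_neg_sq_norm_div_two v)
  · simp only [ContinuousLinearMap.mul_apply', innerSL_apply_apply, smul_apply,
      smul_eq_mul, real_inner_self_eq_norm_sq, integral_const_mul] at h
    simpa only [real_inner_comm u, hpt, integral_neg, neg_inj] using h
  · simp only [ContinuousLinearMap.mul_apply', innerSL_apply_apply]
    exact integrable_exp_neg_sq_norm_div_two.const_mul _
  · simp only [ContinuousLinearMap.mul_apply', innerSL_apply_apply, smul_apply,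
      smul_eq_mul, real_inner_comm u, hpt]
    exact (integrable_inner_sq_mul_exp_neg_sq_norm_div_two u).neg

theorem integral_sq_norm_mul_exp_neg_sq_norm_div_two :
    ∫ v : V, ‖v‖ ^ 2 * exp (-‖v‖ ^ 2 / 2) = finrank ℝ V * ∫ v : V, exp (-‖v‖ ^ 2 / 2) := by
  let b := stdOrthonormalBasis ℝ V
  calc ∫ v : V, ‖v‖ ^ 2 * exp (-‖v‖ ^ 2 / 2)
      = ∫ v : V, ∑ i, ⟪b i, v⟫ ^ 2 * exp (-‖v‖ ^ 2 / 2) := by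
        simp_rw [← Finset.sum_mul, b.sum_sq_inner_right]
    _ = ∑ i, ∫ v : V, ⟪b i, v⟫ ^ 2 * exp (-‖v‖ ^ 2 / 2) :=
        integral_finsetSum _ fun i _ ↦ integrable_inner_sq_mul_exp_neg_sq_norm_div_two (b i)
    _ = finrank ℝ V * ∫ v : V, exp (-‖v‖ ^ 2 / 2) := by
        simp [integral_inner_sq_mul_exp_neg_sq_norm_div_two, b.norm_eq_one]

theorem abs_integral_mul_exp_neg_sq_norm_div_two_sub_le {g : V → ℝ}
    (hg : AEStronglyMeasurable g)
    (a K : ℝ) (c : V) (hK : ∀ v, |g v - a - ⟪c, v⟫| ≤ K * ‖v‖ ^ 2) :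
    |(∫ v, g v * exp (-‖v‖ ^ 2 / 2)) - a * ∫ v : V, exp (-‖v‖ ^ 2 / 2)|
      ≤ K * finrank ℝ V * ∫ v : V, exp (-‖v‖ ^ 2 / 2) := by
  have hr : Integrable fun v ↦ (g v - a - ⟪c, v⟫) * exp (-‖v‖ ^ 2 / 2) :=
    integrable_mul_exp_neg_sq_norm_div_two_of_abs_le (a := 0) (b := K) (by fun_prop)
      fun v ↦ (hK v).trans_eq (zero_add _).symm
  have hsplit : (∫ v, g v * exp (-‖v‖ ^ 2 / 2)) - a * ∫ v : V, exp (-‖v‖ ^ 2 / 2)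
      = ∫ v, (g v - a - ⟪c, v⟫) * exp (-‖v‖ ^ 2 / 2) := by
    have hdecomp (v : V) : g v * exp (-‖v‖ ^ 2 / 2) = a * exp (-‖v‖ ^ 2 / 2)
        + ⟪c, v⟫ * exp (-‖v‖ ^ 2 / 2) + (g v - a - ⟪c, v⟫) * exp (-‖v‖ ^ 2 / 2) := by ring
    have hlin : Integrable fun v ↦ a * exp (-‖v‖ ^ 2 / 2) + ⟪c, v⟫ * exp (-‖v‖ ^ 2 / 2) :=
      (integrable_exp_neg_sq_norm_div_two.const_mul a).add
        (integrable_inner_mul_exp_neg_sq_norm_div_two c)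
    simp_rw [hdecomp]
    rw [integral_add hlin hr,
      integral_add (integrable_exp_neg_sq_norm_div_two.const_mul a)
        (integrable_inner_mul_exp_neg_sq_norm_div_two c),
      integral_const_mul, integral_inner_mul_exp_neg_sq_norm_div_two]
    ring
  rw [hsplit, mul_assoc, ← integral_sq_norm_mul_exp_neg_sq_norm_div_two, ← integral_const_mul]
  refine (abs_integral_le_integral_abs).trans (integral_mono hr.abs
    (integrable_sq_norm_mul_exp_neg_sq_norm_div_two.const_mul K) fun v ↦ ?_)
  rw [abs_mul, abs_of_pos (exp_pos _), ← mul_assoc]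
  exact mul_le_mul_of_nonneg_right (hK v) (exp_pos _).le

end Gaussian

theorem gaussian_smoothing_function_close_general
    (n : ℕ) (f : EuclideanSpace ℝ (Fin n) → ℝ)
    (f' : EuclideanSpace ℝ (Fin n) → EuclideanSpace ℝ (Fin n))
    (hf' : ∀ x, HasGradientAt f (f' x) x)
    (L : ℝ)
    (hLip : ∀ x y, ‖f' y - f' x‖ ≤ L * ‖y - x‖)
    (μ : ℝ) :
    ∀ x : EuclideanSpace ℝ (Fin n),
      |(2 * Real.pi) ^ (-(n : ℝ) / 2) *
          (∫ v : EuclideanSpace ℝ (Fin n), f (x + μ • v) * Real.exp (-‖v‖ ^ 2 / 2))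
        - f x| ≤ μ ^ 2 / 2 * L * n := by
  intro x
  have hTaylor (v : EuclideanSpace ℝ (Fin n)) :
      |f (x + μ • v) - f x - ⟪μ • f' x, v⟫| ≤ L / 2 * μ ^ 2 * ‖v‖ ^ 2 := by
    have h := abs_sub_sub_inner_le_of_lipschitz_gradient hf' hLip x (x + μ • v)
    rwa [add_sub_cancel_left, real_inner_smul_right, ← real_inner_smul_left, norm_smul, mul_pow,
      Real.norm_eq_abs, sq_abs, ← mul_assoc] at h
  have hcont : Continuous fun v ↦ f (x + μ • v) :=
    (Differentiable.continuous fun y ↦ (hf' y).differentiableAt).comp (by fun_prop)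
  have key := abs_integral_mul_exp_neg_sq_norm_div_two_sub_le hcont.aestronglyMeasurable (f x) _ _
    hTaylor
  rw [integral_exp_neg_sq_norm_div_two, finrank_euclideanSpace_fin] at key
  have hpos : 0 < (2 * π) ^ (-(n : ℝ) / 2) := by positivity
  have hinv : (2 * π) ^ (-(n : ℝ) / 2) * (2 * π) ^ ((n : ℝ) / 2) = 1 := by
    rw [← rpow_add (by positivity), neg_div, neg_add_cancel, rpow_zero]
  calc |(2 * π) ^ (-(n : ℝ) / 2) * (∫ v, f (x + μ • v) * exp (-‖v‖ ^ 2 / 2)) - f x|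
      = (2 * π) ^ (-(n : ℝ) / 2) *
          |(∫ v, f (x + μ • v) * exp (-‖v‖ ^ 2 / 2)) - f x * (2 * π) ^ ((n : ℝ) / 2)| := by
        rw [← abs_of_pos hpos, ← abs_mul, abs_of_pos hpos, mul_sub, mul_left_comm, hinv, mul_one]
    _ ≤ (2 * π) ^ (-(n : ℝ) / 2) * (L / 2 * μ ^ 2 * n * (2 * π) ^ ((n : ℝ) / 2)) := by gcongr
    _ = μ ^ 2 / 2 * L * n := by
        rw [mul_comm, mul_assoc, mul_comm ((2 * π) ^ _), hinv]; ring

/-- Lemma 5.1(b), first estimate: for Gaussian smoothing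
`f_μ(x) = (2π)^{-n/2} ∫ f(x + μv) e^{-‖v‖²/2} dv` of a function with `L`-Lipschitz
gradient, `|f_μ(x) - f(x)| ≤ (μ²/2) L n`. -/
theorem gaussian_smoothing_function_close
    (n : ℕ) (f : EuclideanSpace ℝ (Fin n) → ℝ)
    (f' : EuclideanSpace ℝ (Fin n) → EuclideanSpace ℝ (Fin n))
    (hf' : ∀ x, HasGradientAt f (f' x) x)
    (L : ℝ) (hL : 0 < L)
    (hLip : ∀ x y, ‖f' y - f' x‖ ≤ L * ‖y - x‖)
    (μ : ℝ) (hμ : 0 < μ) :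
    ∀ x : EuclideanSpace ℝ (Fin n),
      |(2 * Real.pi) ^ (-(n : ℝ) / 2) *
          (∫ v : EuclideanSpace ℝ (Fin n), f (x + μ • v) * Real.exp (-‖v‖ ^ 2 / 2))
        - f x| ≤ μ ^ 2 / 2 * L * n :=
  gaussian_smoothing_function_close_general n f f' hf' L hLip μ
end
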